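/- arXiv:1710.09708 — 8 statements merged into one kernel-verified Lean document; each statement's English description precedes it below -/
import Mathlib

section
/- For any b > 0, the function w(x) = (1 - x/2)e^x + ((b-1)/2)x - 1 has a unique root ρ on (0, ∞); moreover w(x) > 0 for 0 < x < ρ and w(x) < 0 for x > ρ. -/
/-!
The function `w b` vanishes at `0`, has slope `b / 2 > 0` there, and is strictly concave on
`[0, ∞)` since `w'' x = -(x / 2) eˣ`. Strict concavity with `w b 0 = 0` makes the secant slope
`w b x / x` strictly decreasing on `(0, ∞)`, so `w b` has at most one positive root and its sign
changes from `+` to `-` there. A root exists by the intermediate value theorem, because `w b` is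
positive just to the right of `0` and negative at `max 4 b`.
-/

open Real Set Filter Topology

section StrictConcave

variable {𝕜 : Type*} [Field 𝕜] [LinearOrder 𝕜] [IsStrictOrderedRing 𝕜] {f : 𝕜 → 𝕜} {ρ x : 𝕜}

theorem StrictConcaveOn.strictAntiOn_div_Ioi (hf : StrictConcaveOn 𝕜 (Ici 0) f) (h0 : f 0 = 0) :
    StrictAntiOn (fun x => f x / x) (Ioi 0) := by
  intro x hx y hy hxy
  simpa [h0] using hf.secant_strict_mono self_mem_Ici (mem_Ici.2 (le_of_lt hx))
    (mem_Ici.2 (le_of_lt hy)) (ne_of_gt hx) (ne_of_gt hy) hxy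

theorem StrictConcaveOn.pos_of_lt_root (hf : StrictConcaveOn 𝕜 (Ici 0) f) (h0 : f 0 = 0)
    (hρ : 0 < ρ) (hfρ : f ρ = 0) (hx : 0 < x) (hxρ : x < ρ) : 0 < f x := by
  have : f ρ / ρ < f x / x := hf.strictAntiOn_div_Ioi h0 hx hρ hxρ
  rw [hfρ, zero_div] at this
  simpa using (lt_div_iff₀ hx).1 this

theorem StrictConcaveOn.neg_of_root_lt (hf : StrictConcaveOn 𝕜 (Ici 0) f) (h0 : f 0 = 0)
    (hρ : 0 < ρ) (hfρ : f ρ = 0) (hρx : ρ < x) : f x < 0 := by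
  have hx := hρ.trans hρx
  have : f x / x < f ρ / ρ := hf.strictAntiOn_div_Ioi h0 hρ hx hρx
  rw [hfρ, zero_div] at this
  simpa using (div_lt_iff₀ hx).1 this

end StrictConcave

theorem HasDerivAt.exists_pos_of_deriv_pos {f : ℝ → ℝ} {f' a c : ℝ} (hf : HasDerivAt f f' a)
    (hf' : 0 < f') (ha : f a = 0) (hac : a < c) : ∃ x ∈ Ioo a c, 0 < f x := by
  have hslope : ∀ᶠ x in 𝓝[>] a, 0 < slope f a x :=
    ((hasDerivAt_iff_tendsto_slope.1 hf).mono_left (nhdsGT_le_nhdsNE a)).eventually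
      (eventually_gt_nhds hf')
  have hIoo : ∀ᶠ x in 𝓝[>] a, x ∈ Ioo a c := Ioo_mem_nhdsGT hac
  obtain ⟨x, hx, hpos⟩ := (hIoo.and hslope).exists
  exact ⟨x, hx, pos_of_slope_pos hx.1 hpos ha⟩

theorem StrictConcaveOn.exists_pos_root {f : ℝ → ℝ} {f' X : ℝ}
    (hf : StrictConcaveOn ℝ (Ici 0) f) (h0 : f 0 = 0) (hd : HasDerivAt f f' 0) (hf' : 0 < f')
    (hX : 0 < X) (hfX : f X < 0) : ∃ ρ, 0 < ρ ∧ f ρ = 0 := by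
  obtain ⟨x₀, ⟨hx₀, hx₀X⟩, hfx₀⟩ := hd.exists_pos_of_deriv_pos hf' h0 hX
  have hcont : ContinuousOn f (Icc x₀ X) := by
    refine hf.concaveOn.continuousOn_interior.mono ?_
    rw [interior_Ici]
    exact Icc_subset_Ioi_iff hx₀X.le |>.2 hx₀
  obtain ⟨ρ, hρ, hfρ⟩ := intermediate_value_Ioo' hx₀X.le hcont ⟨hfX, hfx₀⟩
  exact ⟨ρ, hx₀.trans hρ.1, hfρ⟩

noncomputable def w (b x : ℝ) : ℝ := (1 - x / 2) * exp x + (b - 1) / 2 * x - 1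

section w

variable (b : ℝ)

theorem w_zero : w b 0 = 0 := by simp [w]

theorem hasDerivAt_w (x : ℝ) : HasDerivAt (w b) ((1 - x) / 2 * exp x + (b - 1) / 2) x :=
  (((((hasDerivAt_id x).div_const 2).const_sub 1).mul (hasDerivAt_exp x)).add
    ((hasDerivAt_id x).const_mul ((b - 1) / 2)) |>.sub_const 1).congr_deriv
    (by simp only [id]; ring)

theorem iterate_deriv_two_w (x : ℝ) : deriv^[2] (w b) x = -(x / 2) * exp x := by
  have hw' : deriv (w b) = fun x => (1 - x) / 2 * exp x + (b - 1) / 2 :=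
    funext fun x => (hasDerivAt_w b x).deriv
  have hw'' : HasDerivAt (fun x => (1 - x) / 2 * exp x + (b - 1) / 2) (-(x / 2) * exp x) x :=
    ((((hasDerivAt_id x).const_sub 1).div_const 2).mul (hasDerivAt_exp x)).add_const
      ((b - 1) / 2) |>.congr_deriv (by simp only [id]; ring)
  rw [Function.iterate_succ_apply, Function.iterate_one, hw', hw''.deriv]

theorem strictConcaveOn_w : StrictConcaveOn ℝ (Ici 0) (w b) := by
  refine strictConcaveOn_of_deriv2_neg (convex_Ici 0) (by unfold w; fun_prop) fun x hx => ?_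
  rw [interior_Ici] at hx
  rw [iterate_deriv_two_w, neg_mul, neg_lt_zero]
  exact mul_pos (half_pos hx) (exp_pos x)

theorem w_neg_of_four_le {X : ℝ} (h4 : 4 ≤ X) (hb : b ≤ X) : w b X < 0 := by
  have hexp : (1 - X / 2) * exp X ≤ -exp X := by nlinarith [exp_pos X]
  have hlin : (b - 1) / 2 * X ≤ (X - 1) / 2 * X := by nlinarith
  have hquad := quadratic_le_exp_of_nonneg (by linarith : 0 ≤ X)
  unfold w
  nlinarith

end w

theorem stmt_0 (b : ℝ) (hb : 0 < b) :
    ∃ ρ : ℝ, 0 < ρ ∧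
      (1 - ρ / 2) * Real.exp ρ + (b - 1) / 2 * ρ - 1 = 0 ∧
      (∀ x : ℝ, 0 < x → (1 - x / 2) * Real.exp x + (b - 1) / 2 * x - 1 = 0 → x = ρ) ∧
      (∀ x : ℝ, 0 < x → x < ρ → 0 < (1 - x / 2) * Real.exp x + (b - 1) / 2 * x - 1) ∧
      (∀ x : ℝ, ρ < x → (1 - x / 2) * Real.exp x + (b - 1) / 2 * x - 1 < 0) := by
  have hconc := strictConcaveOn_w b
  have hslope : 0 < (1 - 0) / 2 * exp 0 + (b - 1) / 2 := by simp only [exp_zero]; linarith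
  obtain ⟨ρ, hρ, hwρ⟩ := hconc.exists_pos_root (w_zero b) (hasDerivAt_w b 0) hslope
    (lt_max_of_lt_left four_pos) (w_neg_of_four_le b (le_max_left 4 b) (le_max_right 4 b))
  have hpos (x : ℝ) (hx : 0 < x) (hxρ : x < ρ) : 0 < w b x :=
    hconc.pos_of_lt_root (w_zero b) hρ hwρ hx hxρ
  have hneg (x : ℝ) (hρx : ρ < x) : w b x < 0 := hconc.neg_of_root_lt (w_zero b) hρ hwρ hρx
  refine ⟨ρ, hρ, hwρ, fun x hx hwx => ?_, hpos, hneg⟩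
  rcases lt_trichotomy x ρ with h | h | h
  · exact absurd hwx (hpos x hx h).ne'
  · exact h
  · exact absurd hwx (hneg x h).ne
end

section
/- For every b > 0, the integral ∫₀^∞ s·e^{-2s}·(1 - e^{-s})^{b-3}·(e^s - 1 - (s/2)e^s + ((b-1)/2)s) ds equals 0. -/
/-!
The integrand is the derivative on `(0, ∞)` of `F(s) = s² e^{-s} (1 - e^{-s})^{b-2} / 2`.
Since `1 - e^{-s} ~ s` as `s → 0⁺`, `F(s) ~ s^b / 2 → 0` because `b > 0`, and `F(s) → 0` at `∞`
because `s² e^{-s} → 0`. So the integral is `F(∞) - F(0⁺) = 0`.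
-/

open Real Filter Topology Set MeasureTheory

noncomputable def integrand (b s : ℝ) : ℝ :=
  s * exp (-2 * s) * (1 - exp (-s)) ^ (b - 3) *
    (exp s - 1 - s / 2 * exp s + (b - 1) / 2 * s)

noncomputable def antiderivative (b s : ℝ) : ℝ :=
  s ^ 2 * exp (-s) * (1 - exp (-s)) ^ (b - 2) / 2

lemma hasDerivAt_one_sub_exp_neg (x : ℝ) :
    HasDerivAt (fun s ↦ 1 - exp (-s)) (exp (-x)) x := by
  simpa using ((hasDerivAt_neg x).exp).const_sub 1

lemma hasDerivAt_antiderivative (b : ℝ) {x : ℝ} (hx : 0 < x) :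
    HasDerivAt (antiderivative b) (integrand b x) x := by
  have hpos : 0 < 1 - exp (-x) := sub_pos.2 (exp_lt_one_iff.2 (neg_lt_zero.2 hx))
  have hpow := (hasDerivAt_one_sub_exp_neg x).rpow_const (p := b - 2) (Or.inl hpos.ne')
  have h := (((hasDerivAt_pow 2 x).mul (hasDerivAt_neg x).exp).mul hpow).div_const 2
  simp only [Pi.mul_apply] at h
  refine h.congr_deriv ?_
  have hsplit : (1 - exp (-x)) ^ (b - 2) = (1 - exp (-x)) ^ (b - 3) * (1 - exp (-x)) := by
    rw [show b - 2 = b - 3 + 1 by ring, rpow_add_one hpos.ne']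
  have hE : exp x * exp (-x) = 1 := by rw [← exp_add, add_neg_cancel, exp_zero]
  rw [integrand, show b - 2 - 1 = b - 3 by ring, hsplit,
    show -2 * x = -x + -x by ring, exp_add]
  generalize (1 - exp (-x)) ^ (b - 3) = P
  generalize exp (-x) = E at hE ⊢
  linear_combination x * P * E * (x - 2) / 2 * hE

lemma tendsto_one_sub_exp_neg_div_nhdsGT :
    Tendsto (fun s ↦ (1 - exp (-s)) / s) (𝓝[>] 0) (𝓝 1) := by
  simpa [div_eq_inv_mul] using (hasDerivAt_one_sub_exp_neg 0).tendsto_slope_zero_right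

lemma antiderivative_eq {b s : ℝ} (hs : 0 < s) :
    antiderivative b s = (s / (1 - exp (-s))) ^ 2 * exp (-s) * (1 - exp (-s)) ^ b / 2 := by
  have hpos : 0 < 1 - exp (-s) := sub_pos.2 (exp_lt_one_iff.2 (neg_lt_zero.2 hs))
  rw [antiderivative, rpow_sub hpos, rpow_two]
  field_simp

lemma continuousWithinAt_antiderivative_zero {b : ℝ} (hb : 0 < b) :
    ContinuousWithinAt (antiderivative b) (Ici 0) 0 := by
  rw [← continuousWithinAt_Ioi_iff_Ici, ContinuousWithinAt,
    show antiderivative b 0 = 0 by simp [antiderivative]]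
  have hbase : Tendsto (fun s ↦ 1 - exp (-s)) (𝓝[>] 0) (𝓝 0) := by
    simpa using (hasDerivAt_one_sub_exp_neg 0).continuousAt.tendsto.mono_left nhdsWithin_le_nhds
  have hexp : Tendsto (fun s ↦ exp (-s)) (𝓝[>] 0) (𝓝 1) := by
    simpa [Function.comp_def] using
      ((continuous_exp.comp continuous_neg).tendsto 0).mono_left nhdsWithin_le_nhds
  have hrpow := (continuousAt_rpow_const 0 b (Or.inr hb.le)).tendsto.comp hbase
  have h := ((((tendsto_one_sub_exp_neg_div_nhdsGT.inv₀ one_ne_zero).pow 2).mul hexp).mul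
    hrpow).div_const 2
  rw [zero_rpow hb.ne'] at h
  refine Tendsto.congr' ?_ (by simpa using h)
  filter_upwards [self_mem_nhdsWithin] with s hs
  simp [antiderivative_eq hs]

lemma tendsto_antiderivative_atTop (b : ℝ) : Tendsto (antiderivative b) atTop (𝓝 0) := by
  have hbase : Tendsto (fun s ↦ 1 - exp (-s)) atTop (𝓝 1) := by
    simpa using tendsto_exp_neg_atTop_nhds_zero.const_sub 1
  have hrpow := (continuousAt_rpow_const 1 (b - 2) (Or.inl one_ne_zero)).tendsto.comp hbase
  have h := ((tendsto_pow_mul_exp_neg_atTop_nhds_zero 2).mul hrpow).div_const 2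
  rwa [one_rpow, mul_one, zero_div] at h

theorem stmt_1 (b : ℝ) (hb : 0 < b) :
    ∫ s in Set.Ioi (0 : ℝ),
      s * Real.exp (-2 * s) * (1 - Real.exp (-s)) ^ (b - 3) *
        (Real.exp s - 1 - s / 2 * Real.exp s + (b - 1) / 2 * s) = 0 := by
  change ∫ s in Ioi 0, integrand b s = 0
  by_cases hint : IntegrableOn (integrand b) (Ioi 0)
  · rw [integral_Ioi_of_hasDerivAt_of_tendsto (continuousWithinAt_antiderivative_zero hb)
      (fun x hx ↦ hasDerivAt_antiderivative b hx) hint (tendsto_antiderivative_atTop b)]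
    simp [antiderivative]
  -- the Bochner integral of a non-integrable function is `0` by convention
  · exact integral_undef hint
end

section
/- For every natural number n and real b > 0 with b not an integer ≤ n+1, ∑_{k=0}^∞ C(b-1,k)·(-1)^k/(n + b - k) = 0, where C(b-1,k) is the generalized binomial coefficient. -/
/-- Generalized binomial coefficient `C(b-1, k) = (b-1)(b-2)⋯(b-k)/k!`. -/
noncomputable def genBinomR (b : ℝ) (k : ℕ) : ℝ :=
  (∏ j ∈ Finset.range k, (b - 1 - j)) / (Nat.factorial k)

/-!
With `C(b, k) = genBinomR (b + 1) k`, the absorption identity `(b - k) C(b, k) = b C(b - 1, k)`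
splits `C(b - 1, k) / (n + 1 + b - k)` into `C(b, k) / b` minus `(n + 1) / b` times the term of
the same series for `(n, b + 1)`, so induction on `n` reduces everything to `(1 - 1) ^ b = 0`,
i.e. `∑ (-1)^k C(b, k) = 0`. Its partial sums are `(-1)^m C(b - 1, m)`. For `k ≥ b` we have
`|C(b - 1, k + 1)| = (1 - b / (k + 1)) |C(b - 1, k)|`: the divergence of `∑ b / (k + 1)` forces
`C(b - 1, k) → 0`, and the same recursion telescopes
`∑ |C(b, k + 1)| = ∑ b / (k + 1) |C(b - 1, k)|` to a bounded sum.
-/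

open Filter Finset Topology

section DecayOfProducts

variable {a w : ℕ → ℝ}

theorem sum_range_mul_le_sub (hrec : ∀ k, a (k + 1) ≤ (1 - w k) * a k) (n : ℕ) :
    ∑ k ∈ range n, w k * a k ≤ a 0 - a n := by
  induction n with
  | zero => simp
  | succ n ih =>
    rw [sum_range_succ]
    linarith [hrec n, sub_mul 1 (w n) (a n), one_mul (a n)]

variable (ha : ∀ k, 0 ≤ a k) (hw : ∀ k, 0 ≤ w k) (hrec : ∀ k, a (k + 1) ≤ (1 - w k) * a k)
include ha hw hrec

theorem summable_mul_of_le_one_sub_mul : Summable fun k => w k * a k :=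
  summable_of_sum_range_le (fun k => mul_nonneg (hw k) (ha k))
    fun n => (sum_range_mul_le_sub hrec n).trans (sub_le_self _ (ha n))

/-- `a` is antitone, so `(∑_{k<n} w k) * a n ≤ ∑_{k<n} w k * a k ≤ a 0`. -/
theorem tendsto_zero_of_le_one_sub_mul (hdiv : ¬Summable w) : Tendsto a atTop (𝓝 0) := by
  have hanti : Antitone a := antitone_nat_of_succ_le fun k => by
    nlinarith [hrec k, mul_nonneg (hw k) (ha k)]
  have hW := (not_summable_iff_tendsto_nat_atTop_of_nonneg hw).mp hdiv
  have hbound (n : ℕ) : (∑ k ∈ range n, w k) * a n ≤ a 0 :=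
    calc (∑ k ∈ range n, w k) * a n = ∑ k ∈ range n, w k * a n := sum_mul _ _ _
      _ ≤ ∑ k ∈ range n, w k * a k := sum_le_sum fun k hk =>
          mul_le_mul_of_nonneg_left (hanti (mem_range.mp hk).le) (hw k)
      _ ≤ a 0 - a n := sum_range_mul_le_sub hrec n
      _ ≤ a 0 := sub_le_self _ (ha n)
  refine squeeze_zero' (Eventually.of_forall ha) ?_ ((tendsto_const_nhds (x := a 0)).div_atTop hW)
  filter_upwards [hW.eventually_gt_atTop 0] with n hn
  rw [le_div_iff₀ hn, mul_comm]
  exact hbound n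

end DecayOfProducts

section GenBinom

theorem genBinomR_succ (b : ℝ) (k : ℕ) :
    genBinomR b (k + 1) = genBinomR b k * (b - 1 - k) / (k + 1) := by
  simp only [genBinomR, prod_range_succ, Nat.factorial_succ, Nat.cast_mul, Nat.cast_succ]
  field_simp

theorem genBinomR_add_one_succ (b : ℝ) (k : ℕ) :
    genBinomR (b + 1) (k + 1) = b / (k + 1) * genBinomR b k := by
  simp only [genBinomR, prod_range_succ', Nat.factorial_succ, Nat.cast_mul, Nat.cast_succ]
  field_simp
  ring_nf

theorem genBinomR_add_one_mul_sub (b : ℝ) (k : ℕ) :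
    genBinomR (b + 1) k * (b - k) = b * genBinomR b k := by
  have h := genBinomR_succ (b + 1) k
  rw [genBinomR_add_one_succ] at h
  field_simp at h
  linear_combination -h

theorem sum_range_succ_genBinomR_add_one_mul_neg_one_pow (b : ℝ) (m : ℕ) :
    ∑ k ∈ range (m + 1), genBinomR (b + 1) k * (-1) ^ k = genBinomR b m * (-1) ^ m := by
  induction m with
  | zero => simp [genBinomR]
  | succ m ih =>
    rw [sum_range_succ, ih, genBinomR_add_one_succ, genBinomR_succ]
    field_simp
    ring

theorem abs_genBinomR_succ {b : ℝ} {k : ℕ} (hk : b ≤ k + 1) :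
    |genBinomR b (k + 1)| = (1 - b / (k + 1)) * |genBinomR b k| := by
  rw [genBinomR_succ, abs_div, abs_mul, abs_of_nonpos (show b - 1 - (k : ℝ) ≤ 0 by linarith),
    abs_of_pos (show (0 : ℝ) < k + 1 by positivity)]
  field_simp
  ring

theorem abs_genBinomR_le_one_sub_mul {b : ℝ} (k : ℕ) :
    |genBinomR b (k + 1 + ⌈b⌉₊)| ≤
      (1 - b / ((k + ⌈b⌉₊ : ℕ) + 1)) * |genBinomR b (k + ⌈b⌉₊)| := by
  have hk : b ≤ ((k + ⌈b⌉₊ : ℕ) : ℝ) + 1 := by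
    push_cast
    linarith [Nat.le_ceil b, (k.cast_nonneg : (0 : ℝ) ≤ k)]
  rw [add_right_comm, abs_genBinomR_succ hk]

theorem not_summable_div_add_ceil_succ {b : ℝ} (hb : 0 < b) :
    ¬Summable fun k : ℕ => b / ((k + ⌈b⌉₊ : ℕ) + 1) := by
  have h : (fun k : ℕ => b / (((k + ⌈b⌉₊ : ℕ) : ℝ) + 1)) =
      fun k => b * ((k + (⌈b⌉₊ + 1) : ℕ) : ℝ)⁻¹ := by
    funext k
    push_cast
    ring
  rw [h, summable_mul_left_iff hb.ne', summable_nat_add_iff (f := fun n : ℕ => ((n : ℝ))⁻¹)]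
  exact Real.not_summable_natCast_inv

theorem tendsto_genBinomR {b : ℝ} (hb : 0 < b) : Tendsto (genBinomR b) atTop (𝓝 0) := by
  have h := tendsto_zero_of_le_one_sub_mul (a := fun k => |genBinomR b (k + ⌈b⌉₊)|)
    (fun k => abs_nonneg _) (fun k => by positivity) abs_genBinomR_le_one_sub_mul
    (not_summable_div_add_ceil_succ hb)
  rw [← tendsto_add_atTop_iff_nat ⌈b⌉₊]
  exact tendsto_zero_iff_abs_tendsto_zero _ |>.mpr h

theorem summable_genBinomR_add_one_mul_neg_one_pow {b : ℝ} (hb : 0 < b) :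
    Summable fun k => genBinomR (b + 1) k * (-1) ^ k := by
  have h := summable_mul_of_le_one_sub_mul (a := fun k => |genBinomR b (k + ⌈b⌉₊)|)
    (w := fun k => b / ((k + ⌈b⌉₊ : ℕ) + 1)) (fun k => abs_nonneg _) (fun k => by positivity)
    abs_genBinomR_le_one_sub_mul
  refine .of_abs ((summable_nat_add_iff (⌈b⌉₊ + 1)).mp (h.congr fun k => ?_))
  rw [← add_assoc, genBinomR_add_one_succ, abs_mul, abs_mul,
    abs_neg_one_pow, mul_one, abs_of_pos (show 0 < b / ((k + ⌈b⌉₊ : ℕ) + 1) by positivity)]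

/-- The binomial series of `(1 + x) ^ b` converges to `0` at `x = -1`. -/
theorem hasSum_genBinomR_add_one_mul_neg_one_pow {b : ℝ} (hb : 0 < b) :
    HasSum (fun k => genBinomR (b + 1) k * (-1) ^ k) 0 := by
  rw [(summable_genBinomR_add_one_mul_neg_one_pow hb).hasSum_iff_tendsto_nat,
    ← tendsto_add_atTop_iff_nat 1]
  simp only [sum_range_succ_genBinomR_add_one_mul_neg_one_pow]
  refine squeeze_zero_norm (fun m => ?_) ((tendsto_genBinomR hb).norm.trans (by simp))
  simp

theorem genBinomR_mul_div_eq {b m : ℝ} (hb : b ≠ 0) {k : ℕ} (hk : m + b - k ≠ 0) (c : ℝ) :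
    genBinomR b k * c / (m + b - k) =
      (genBinomR (b + 1) k * c - m * (genBinomR (b + 1) k * c / (m + b - k))) / b := by
  have h := genBinomR_add_one_mul_sub b k
  field_simp
  linear_combination (-c) * h

end GenBinom

theorem stmt_8 (n : ℕ) (b : ℝ) (hb : 0 < b)
    (hne : ∀ k : ℕ, (n : ℝ) + b - k ≠ 0) :
    HasSum (fun k : ℕ => genBinomR b k * (-1) ^ k / ((n : ℝ) + b - k)) 0 := by
  induction n generalizing b with
  | zero =>
    have h := (hasSum_genBinomR_add_one_mul_neg_one_pow hb).div_const b
    rw [zero_div] at h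
    refine h.congr_fun fun k => ?_
    rw [genBinomR_mul_div_eq hb.ne' (hne k)]
    simp
  | succ n ih =>
    have hne' (k : ℕ) : (n : ℝ) + (b + 1) - k ≠ 0 := by
      convert hne k using 1
      push_cast
      ring
    have h := ((hasSum_genBinomR_add_one_mul_neg_one_pow hb).sub
      ((ih (b + 1) (by linarith) hne').mul_left ((n : ℝ) + 1))).div_const b
    rw [mul_zero, sub_zero, zero_div] at h
    refine h.congr_fun fun k => ?_
    rw [genBinomR_mul_div_eq hb.ne' (hne k)]
    push_cast
    ring_nf
end

section
/- Let b > 1 and c > 0. The function Y_c(x) = (∫₀^x e^{ct}(1-e^{-t})^{b-1} dt) / (e^{cx}(1-e^{-x})^{b-1}) is increasing on (0, ∞). -/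
/-! Write `g t = e^{ct} (1 - e^{-t})^{b-1}`, so that `Y_c = (∫₀ˣ g) / g`. Then `g 0 = 0` and
`g' = g h` with `h t = c + (b - 1) / (e^t - 1)` strictly decreasing. For `t < x` this gives
`h x * g t ≤ g' t`, whence `h x * ∫₀ˣ g ≤ g x`; for `x < t` it gives `g' t < h x * g t`, whence
`g y - g x < h x * ∫ₓʸ g`. Combining the two, `(∫₀ˣ g) * g y < (∫₀ʸ g) * g x` for `0 < x < y`. -/

open Real MeasureTheory intervalIntegral Set

section IntegralRatio

variable {g h : ℝ → ℝ} {a x y : ℝ}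

theorem mul_integral_le_sub_of_antitoneOn (hax : a ≤ x) (hg : ContinuousOn g (Icc a x))
    (hpos : ∀ t ∈ Ioo a x, 0 ≤ g t) (hderiv : ∀ t ∈ Ioo a x, HasDerivAt g (g t * h t) t)
    (hh : AntitoneOn h (Ioc a x)) :
    h x * ∫ t in a..x, g t ≤ g x - g a := by
  rw [← intervalIntegral.integral_const_mul]
  refine integral_le_sub_of_hasDeriv_right_of_le hax hg
    (fun t ht => (hderiv t ht).hasDerivWithinAt) (hg.const_smul (h x)).integrableOn_Icc
    fun t ht => ?_
  rw [mul_comm (h x)]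
  exact mul_le_mul_of_nonneg_left
    (hh (Ioo_subset_Ioc_self ht) (right_mem_Ioc.2 (ht.1.trans ht.2)) ht.2.le) (hpos t ht)

theorem sub_le_mul_integral_of_antitoneOn (hxy : x ≤ y) (hg : ContinuousOn g (Icc x y))
    (hpos : ∀ t ∈ Ioo x y, 0 ≤ g t) (hderiv : ∀ t ∈ Ioo x y, HasDerivAt g (g t * h t) t)
    (hh : AntitoneOn h (Ico x y)) :
    g y - g x ≤ h x * ∫ t in x..y, g t := by
  rw [← intervalIntegral.integral_const_mul]
  refine sub_le_integral_of_hasDeriv_right_of_le hxy hg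
    (fun t ht => (hderiv t ht).hasDerivWithinAt) (hg.const_smul (h x)).integrableOn_Icc
    fun t ht => ?_
  rw [mul_comm (h x)]
  exact mul_le_mul_of_nonneg_left
    (hh (left_mem_Ico.2 (ht.1.trans ht.2)) (Ioo_subset_Ico_self ht) ht.1.le) (hpos t ht)

theorem sub_lt_mul_integral_of_strictAntiOn (hxy : x < y) (hg : ContinuousOn g (Icc x y))
    (hpos : ∀ t ∈ Ioo x y, 0 < g t) (hderiv : ∀ t ∈ Ioo x y, HasDerivAt g (g t * h t) t)
    (hh : StrictAntiOn h (Ico x y)) :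
    g y - g x < h x * ∫ t in x..y, g t := by
  -- the comparison of integrals is only non-strict; strictness comes from `h m < h x`
  obtain ⟨m, hxm, hmy⟩ := exists_between hxy
  have hxm_sub : Icc x m ⊆ Icc x y := Icc_subset_Icc_right hmy.le
  have hmy_sub : Icc m y ⊆ Icc x y := Icc_subset_Icc_left hxm.le
  have hleft : g m - g x ≤ h x * ∫ t in x..m, g t :=
    sub_le_mul_integral_of_antitoneOn hxm.le (hg.mono hxm_sub)
      (fun t ht => (hpos t ⟨ht.1, ht.2.trans hmy⟩).le)
      (fun t ht => hderiv t ⟨ht.1, ht.2.trans hmy⟩)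
      (hh.antitoneOn.mono (Ico_subset_Ico_right hmy.le))
  have hright : g y - g m ≤ h m * ∫ t in m..y, g t :=
    sub_le_mul_integral_of_antitoneOn hmy.le (hg.mono hmy_sub)
      (fun t ht => (hpos t ⟨hxm.trans ht.1, ht.2⟩).le)
      (fun t ht => hderiv t ⟨hxm.trans ht.1, ht.2⟩)
      (hh.antitoneOn.mono (Ico_subset_Ico_left hxm.le))
  have hhm : h m < h x := hh (left_mem_Ico.2 hxy) ⟨hxm.le, hmy⟩ hxm
  have hint_pos : 0 < ∫ t in m..y, g t :=
    intervalIntegral_pos_of_pos_on ((hg.mono hmy_sub).intervalIntegrable_of_Icc hmy.le)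
      (fun t ht => hpos t ⟨hxm.trans ht.1, ht.2⟩) hmy
  rw [← integral_add_adjacent_intervals ((hg.mono hxm_sub).intervalIntegrable_of_Icc hxm.le)
    ((hg.mono hmy_sub).intervalIntegrable_of_Icc hmy.le)]
  nlinarith

theorem strictMonoOn_integral_div_of_hasDerivAt_mul
    (hg : ContinuousOn g (Ici a)) (hga : g a = 0) (hpos : ∀ t ∈ Ioi a, 0 < g t)
    (hderiv : ∀ t ∈ Ioi a, HasDerivAt g (g t * h t) t) (hh : StrictAntiOn h (Ioi a)) :
    StrictMonoOn (fun x => (∫ t in a..x, g t) / g x) (Ioi a) := by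
  intro x (hx : a < x) y (hy : a < y) hxy
  have hax : Icc a x ⊆ Ici a := Icc_subset_Ici_self
  have hxy_sub : Icc x y ⊆ Ici a := fun t ht => hx.le.trans ht.1
  have hG : h x * ∫ t in a..x, g t ≤ g x := by
    simpa only [hga, sub_zero] using mul_integral_le_sub_of_antitoneOn hx.le (hg.mono hax)
      (fun t ht => (hpos t ht.1).le) (fun t ht => hderiv t ht.1)
      (hh.antitoneOn.mono Ioc_subset_Ioi_self)
  have hB : g y - g x < h x * ∫ t in x..y, g t :=
    sub_lt_mul_integral_of_strictAntiOn hxy (hg.mono hxy_sub) (fun t ht => hpos t (hx.trans ht.1))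
      (fun t ht => hderiv t (hx.trans ht.1)) (hh.mono fun t ht => hx.trans_le ht.1)
  have hG_pos : 0 < ∫ t in a..x, g t :=
    intervalIntegral_pos_of_pos_on ((hg.mono hax).intervalIntegrable_of_Icc hx.le)
      (fun t ht => hpos t ht.1) hx
  have hB_pos : 0 < ∫ t in x..y, g t :=
    intervalIntegral_pos_of_pos_on ((hg.mono hxy_sub).intervalIntegrable_of_Icc hxy.le)
      (fun t ht => hpos t (hx.trans ht.1)) hxy
  dsimp only
  rw [← integral_add_adjacent_intervals ((hg.mono hax).intervalIntegrable_of_Icc hx.le)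
    ((hg.mono hxy_sub).intervalIntegrable_of_Icc hxy.le), div_lt_div_iff₀ (hpos x hx) (hpos y hy)]
  nlinarith [mul_lt_mul_of_pos_left hB hG_pos, mul_le_mul_of_nonneg_right hG hB_pos.le]

end IntegralRatio

theorem one_sub_exp_neg_pos {t : ℝ} (ht : 0 < t) : 0 < 1 - exp (-t) :=
  sub_pos.2 (exp_lt_one_iff.2 (neg_lt_zero.2 ht))

theorem continuous_exp_mul_mul_one_sub_exp_neg_rpow (c : ℝ) {b : ℝ} (hb : 1 ≤ b) :
    Continuous fun t => exp (c * t) * (1 - exp (-t)) ^ (b - 1) := by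
  fun_prop (disch := linarith)

theorem hasDerivAt_exp_mul_mul_one_sub_exp_neg_rpow (b c : ℝ) {t : ℝ} (ht : 0 < t) :
    HasDerivAt (fun t => exp (c * t) * (1 - exp (-t)) ^ (b - 1))
      (exp (c * t) * (1 - exp (-t)) ^ (b - 1) * (c + (b - 1) / (exp t - 1))) t := by
  have hu := one_sub_exp_neg_pos ht
  have he : exp t - 1 ≠ 0 := (sub_pos.2 (one_lt_exp_iff.2 ht)).ne'
  refine (((hasDerivAt_id t).const_mul c).exp.mul
    (((hasDerivAt_neg t).exp.const_sub 1).rpow_const (p := b - 1) (Or.inl hu.ne'))).congr_deriv ?_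
  have hinv : exp (-t) * exp t = 1 := by rw [← exp_add, neg_add_cancel, exp_zero]
  rw [rpow_sub_one hu.ne' (b - 1), id]
  generalize (1 - exp (-t)) ^ (b - 1) = P
  field_simp
  linear_combination (b - 1) * P * hinv

theorem strictAntiOn_add_div_exp_sub_one (c : ℝ) {k : ℝ} (hk : 0 < k) :
    StrictAntiOn (fun t => c + k / (exp t - 1)) (Ioi 0) := by
  intro s (hs : 0 < s) t _ hst
  have he : 0 < exp s - 1 := sub_pos.2 (one_lt_exp_iff.2 hs)
  simpa using div_lt_div_of_pos_left hk he (by simpa using exp_lt_exp.2 hst)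

theorem stmt_10_general (b c : ℝ) (hb : 1 < b) :
    StrictMonoOn
      (fun x : ℝ =>
        (∫ t in Set.Ioo (0 : ℝ) x, Real.exp (c * t) * (1 - Real.exp (-t)) ^ (b - 1)) /
          (Real.exp (c * x) * (1 - Real.exp (-x)) ^ (b - 1)))
      (Set.Ioi 0) := by
  have hmono := strictMonoOn_integral_div_of_hasDerivAt_mul
    (continuous_exp_mul_mul_one_sub_exp_neg_rpow c hb.le).continuousOn
    (by simp [zero_rpow (sub_pos.2 hb).ne'])
    (fun t ht => mul_pos (exp_pos _) (rpow_pos_of_pos (one_sub_exp_neg_pos ht) _))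
    (fun t ht => hasDerivAt_exp_mul_mul_one_sub_exp_neg_rpow b c ht)
    (strictAntiOn_add_div_exp_sub_one c (sub_pos.2 hb))
  refine hmono.congr fun x (hx : 0 < x) => ?_
  simp only [integral_of_le hx.le, integral_Ioc_eq_integral_Ioo]

theorem stmt_10 (b c : ℝ) (hb : 1 < b) (hc : 0 < c) :
    StrictMonoOn
      (fun x : ℝ =>
        (∫ t in Set.Ioo (0 : ℝ) x, Real.exp (c * t) * (1 - Real.exp (-t)) ^ (b - 1)) /
          (Real.exp (c * x) * (1 - Real.exp (-x)) ^ (b - 1)))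
      (Set.Ioi 0) :=
  stmt_10_general b c hb
end

section
/- Let I, J ⊂ ℝ be open intervals and f : I × J → (0,∞) with x ↦ f(a,x) integrable for each a, a ↦ f(a,x) differentiable, ∂_a f locally dominated by an integrable function, and the logarithmic derivative ∂_a f(a,x)/f(a,x) increasing in x. Then for each p ∈ (0,1), the p-quantile q(a) of the distribution with density f(a,·)/∫_J f(a,t)dt is increasing in a. -/
/-!
If `∂ₐ log f(a, x)` increases in `x`, then for `a ≤ b` the ratio `f(b, ·) / f(a, ·)` increases
(monotone likelihood ratio): `f(b, x) f(a, y) ≤ f(a, x) f(b, y)` for `x ≤ y`. Integrating this over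
`x ≤ c < y` shows that the distribution function of `f(b, ·)` lies below that of `f(a, ·)`
(first-order stochastic dominance). Distribution functions of positive densities are strictly
increasing on the interval `J`, so the `p`-quantile of `f(b, ·)` is at least that of `f(a, ·)`.
-/

open Real MeasureTheory Set

theorem monotoneOn_div_of_logDeriv_le {I : Set ℝ} (hI : Convex ℝ I) {u v : ℝ → ℝ}
    (hu : ∀ s ∈ I, 0 < u s) (hv : ∀ s ∈ I, 0 < v s)
    (hud : ∀ s ∈ I, DifferentiableAt ℝ u s) (hvd : ∀ s ∈ I, DifferentiableAt ℝ v s)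
    (hle : ∀ s ∈ I, deriv u s / u s ≤ deriv v s / v s) :
    MonotoneOn (fun s => v s / u s) I := by
  have hderiv : ∀ s ∈ I, HasDerivAt (fun s => v s / u s)
      ((deriv v s * u s - v s * deriv u s) / u s ^ 2) s :=
    fun s hs => (hvd s hs).hasDerivAt.div (hud s hs).hasDerivAt (hu s hs).ne'
  refine monotoneOn_of_hasDerivWithinAt_nonneg hI
    (fun s hs => (hderiv s hs).continuousAt.continuousWithinAt)
    (fun s hs => (hderiv s (interior_subset hs)).hasDerivWithinAt) fun s hs => ?_
  replace hs := interior_subset hs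
  have hcross := (div_le_div_iff₀ (hu s hs) (hv s hs)).mp (hle s hs)
  exact div_nonneg (by linarith) (sq_nonneg _)

theorem mul_le_mul_of_monotoneOn_logDeriv {I J : Set ℝ} (hI : Convex ℝ I) {f : ℝ → ℝ → ℝ}
    (hpos : ∀ a ∈ I, ∀ x ∈ J, 0 < f a x)
    (hdiff : ∀ x ∈ J, ∀ a ∈ I, DifferentiableAt ℝ (fun a' => f a' x) a)
    (hlog : ∀ a ∈ I, MonotoneOn (fun x => deriv (fun a' => f a' x) a / f a x) J)
    {a b : ℝ} (ha : a ∈ I) (hb : b ∈ I) (hab : a ≤ b)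
    {x y : ℝ} (hx : x ∈ J) (hy : y ∈ J) (hxy : x ≤ y) :
    f b x * f a y ≤ f a x * f b y := by
  have hratio := monotoneOn_div_of_logDeriv_le hI (u := fun s => f s x) (v := fun s => f s y)
    (fun s hs => hpos s hs x hx) (fun s hs => hpos s hs y hy) (fun s hs => hdiff x hx s hs)
    (fun s hs => hdiff y hy s hs) (fun s hs => hlog s hs hx hy hxy) ha hb hab
  rw [div_le_div_iff₀ (hpos a ha x hx) (hpos b hb x hx)] at hratio
  linarith

theorem setIntegral_pos_of_pos_on {α : Type*} [MeasurableSpace α] {μ : Measure α} {f : α → ℝ}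
    {s : Set α} (hs : MeasurableSet s) (hμ : μ s ≠ 0) (hf : IntegrableOn f s μ)
    (hpos : ∀ x ∈ s, 0 < f x) : 0 < ∫ x in s, f x ∂μ := by
  rw [setIntegral_pos_iff_support_of_nonneg_ae
    ((ae_restrict_iff' hs).2 (ae_of_all _ fun x hx => (hpos x hx).le)) hf]
  exact (pos_iff_ne_zero.2 hμ).trans_le (measure_mono fun x hx => ⟨(hpos x hx).ne', hx⟩)

theorem setIntegral_mul_setIntegral_le {α : Type*} [MeasurableSpace α] {μ : Measure α}
    {g h : α → ℝ} {A B : Set α} (hA : MeasurableSet A) (hB : MeasurableSet B)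
    (hgA : IntegrableOn g A μ) (hhA : IntegrableOn h A μ)
    (hgB : IntegrableOn g B μ) (hhB : IntegrableOn h B μ)
    (hcross : ∀ x ∈ A, ∀ y ∈ B, h x * g y ≤ g x * h y) :
    (∫ x in A, h x ∂μ) * (∫ y in B, g y ∂μ) ≤ (∫ x in A, g x ∂μ) * ∫ y in B, h y ∂μ := by
  have hinner : ∀ x ∈ A, h x * ∫ y in B, g y ∂μ ≤ g x * ∫ y in B, h y ∂μ := by
    intro x hx
    rw [← integral_const_mul, ← integral_const_mul]
    exact setIntegral_mono_on (hgB.const_mul _) (hhB.const_mul _) hB (hcross x hx)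
  calc (∫ x in A, h x ∂μ) * (∫ y in B, g y ∂μ) = ∫ x in A, h x * (∫ y in B, g y ∂μ) ∂μ :=
        (integral_mul_const _ _).symm
    _ ≤ ∫ x in A, g x * (∫ y in B, h y ∂μ) ∂μ :=
        setIntegral_mono_on (hhA.mul_const _) (hgA.mul_const _) hA hinner
    _ = (∫ x in A, g x ∂μ) * ∫ y in B, h y ∂μ := integral_mul_const _ _

theorem setIntegral_inter_Iic_mul_le {J : Set ℝ} (hJ : MeasurableSet J) {g h : ℝ → ℝ}
    (hg : IntegrableOn g J) (hh : IntegrableOn h J)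
    (hcross : ∀ x ∈ J, ∀ y ∈ J, x ≤ y → h x * g y ≤ g x * h y) (c : ℝ) :
    (∫ t in J ∩ Iic c, h t) * ∫ t in J, g t ≤ (∫ t in J ∩ Iic c, g t) * ∫ t in J, h t := by
  have hsplit : ∀ φ : ℝ → ℝ, IntegrableOn φ J →
      ∫ t in J, φ t = (∫ t in J ∩ Iic c, φ t) + ∫ t in J ∩ Ioi c, φ t := by
    intro φ hφ
    rw [← setIntegral_union ((Iic_disjoint_Ioi le_rfl).mono inter_subset_right inter_subset_right)
      (hJ.inter measurableSet_Ioi) (hφ.mono_set inter_subset_left) (hφ.mono_set inter_subset_left),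
      ← inter_union_distrib_left, Iic_union_Ioi, inter_univ]
  have hlower := setIntegral_mul_setIntegral_le (hJ.inter (measurableSet_Iic (a := c)))
    (hJ.inter (measurableSet_Ioi (a := c))) (hg.mono_set inter_subset_left)
    (hh.mono_set inter_subset_left)
    (hg.mono_set inter_subset_left) (hh.mono_set inter_subset_left)
    fun x hx y hy => hcross x hx.1 y hy.1 (hx.2.trans (le_of_lt hy.2))
  rw [hsplit g hg, hsplit h hh]
  linear_combination hlower

theorem strictMonoOn_setIntegral_inter_Iic {J : Set ℝ} (hJ : J.OrdConnected) {f : ℝ → ℝ}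
    (hf : IntegrableOn f J) (hpos : ∀ x ∈ J, 0 < f x) :
    StrictMonoOn (fun c => ∫ t in J ∩ Iic c, f t) J := by
  intro x hx y hy hxy
  have hIoc : Ioc x y ⊆ J := Ioc_subset_Icc_self.trans (hJ.out hx hy)
  have hIoc_pos : 0 < ∫ t in Ioc x y, f t :=
    setIntegral_pos_of_pos_on measurableSet_Ioc (by simp [hxy]) (hf.mono_set hIoc)
      fun t ht => hpos t (hIoc ht)
  dsimp only
  rw [← Iic_union_Ioc_eq_Iic hxy.le, inter_union_distrib_left, inter_eq_right.2 hIoc,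
    setIntegral_union ((Iic_disjoint_Ioc le_rfl).mono_left inter_subset_right) measurableSet_Ioc
      (hf.mono_set inter_subset_left) (hf.mono_set hIoc)]
  linarith

theorem stmt_13_general (I J : Set ℝ) (hIc : Convex ℝ I)
    (hJ : IsOpen J) (hJc : Convex ℝ J)
    (f : ℝ → ℝ → ℝ)
    (hpos : ∀ a ∈ I, ∀ x ∈ J, 0 < f a x)
    (hint : ∀ a ∈ I, IntegrableOn (f a) J)
    (hdiff : ∀ x ∈ J, ∀ a ∈ I, DifferentiableAt ℝ (fun a' => f a' x) a)
    (hlog : ∀ a ∈ I, MonotoneOn (fun x => deriv (fun a' => f a' x) a / f a x) J)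
    (p : ℝ)
    (q : ℝ → ℝ)
    (hq : ∀ a ∈ I, q a ∈ J ∧
      (∫ t in J ∩ Set.Iic (q a), f a t) = p * ∫ t in J, f a t) :
    MonotoneOn q I := by
  intro a ha b hb hab
  obtain ⟨hqaJ, hqa⟩ := hq a ha
  obtain ⟨hqbJ, hqb⟩ := hq b hb
  have hmass : 0 < ∫ t in J, f a t := setIntegral_pos_of_pos_on hJ.measurableSet
    (hJ.measure_pos volume ⟨q a, hqaJ⟩).ne' (hint a ha) (hpos a ha)
  have hdominance := setIntegral_inter_Iic_mul_le hJ.measurableSet (hint a ha) (hint b hb)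
    (fun x hx y hy hxy => mul_le_mul_of_monotoneOn_logDeriv hIc hpos hdiff hlog ha hb hab hx hy hxy)
    (q a)
  have hle : ∫ t in J ∩ Iic (q a), f b t ≤ ∫ t in J ∩ Iic (q b), f b t := by
    rw [hqb]
    exact le_of_mul_le_mul_right (hdominance.trans_eq (by rw [hqa]; ring)) hmass
  exact ((strictMonoOn_setIntegral_inter_Iic hJc.ordConnected (hint b hb) (hpos b hb)).le_iff_le
    hqaJ hqbJ).1 hle

theorem stmt_13 (I J : Set ℝ) (hI : IsOpen I) (hIc : Convex ℝ I)
    (hJ : IsOpen J) (hJc : Convex ℝ J)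
    (f : ℝ → ℝ → ℝ)
    (hpos : ∀ a ∈ I, ∀ x ∈ J, 0 < f a x)
    (hint : ∀ a ∈ I, IntegrableOn (f a) J)
    (hdiff : ∀ x ∈ J, ∀ a ∈ I, DifferentiableAt ℝ (fun a' => f a' x) a)
    (hdom : ∀ K ⊆ I, IsCompact K → ∃ g : ℝ → ℝ, IntegrableOn g J ∧
      ∀ a ∈ K, ∀ x ∈ J, |deriv (fun a' => f a' x) a| ≤ g x)
    (hlog : ∀ a ∈ I, MonotoneOn (fun x => deriv (fun a' => f a' x) a / f a x) J)
    (p : ℝ) (hp : p ∈ Set.Ioo (0 : ℝ) 1)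
    (q : ℝ → ℝ)
    (hq : ∀ a ∈ I, q a ∈ J ∧
      (∫ t in J ∩ Set.Iic (q a), f a t) = p * ∫ t in J, f a t) :
    MonotoneOn q I :=
  stmt_13_general I J hIc hJ hJc f hpos hint hdiff hlog p q hq
end

section
/- Let F_n : ℝ∪{±∞} → [0,1] be cumulative distribution functions (extended by F_n(-∞)=0, F_n(+∞)=1), with F_n(q_n) = p ∈ (0,1), F_n converging pointwise to F_∞, and q_n → q_∞ in the extended reals. Then sup{x : F_∞(x) < p} ≤ q_∞ ≤ inf{x : F_∞(x) > p}. In particular, if F_∞ is continuous then F_∞(q_∞) = p. -/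
open Filter Topology

/-!
If `F_∞ x < p` then eventually `F_n x < p = F_n (q_n)`, so `x ≤ q_n` by monotonicity and, in the
limit, `x ≤ q_∞`; symmetrically on the other side. When `F_∞` is continuous, `{F_∞ < p}` is open,
so `F_∞ q_∞ < p` would put points strictly above `q_∞` into it, against the first bound (and
`F_∞ ⊤ = 1 > p` excludes `q_∞ = ⊤`).
-/

section QuantileLimit

variable {ι α β : Type*} [LinearOrder α] [TopologicalSpace α] [LinearOrder β]
  [TopologicalSpace β] [OrderTopology β] {l : Filter ι} [l.NeBot]
  {F : ι → α → β} {G : α → β} {q : ι → α} {a x : α} {p : β}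

theorem le_of_tendsto_of_apply_lt_level [OrderClosedTopology α] (hF : ∀ i, Monotone (F i))
    (hq : ∀ i, F i (q i) = p) (hFx : Tendsto (fun i => F i x) l (𝓝 (G x)))
    (hqa : Tendsto q l (𝓝 a)) (hx : G x < p) : x ≤ a := by
  refine ge_of_tendsto hqa ?_
  filter_upwards [hFx.eventually_lt_const hx] with i hi
  exact ((hF i).reflect_lt (hq i ▸ hi)).le

theorem le_of_tendsto_of_level_lt_apply [OrderClosedTopology α] (hF : ∀ i, Monotone (F i))
    (hq : ∀ i, F i (q i) = p) (hFx : Tendsto (fun i => F i x) l (𝓝 (G x)))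
    (hqa : Tendsto q l (𝓝 a)) (hx : p < G x) : a ≤ x :=
  le_of_tendsto_of_apply_lt_level (α := αᵒᵈ) (β := βᵒᵈ) (fun i => (hF i).dual) hq hFx hqa
    hx

end QuantileLimit

section ContinuousLevel

variable {α β : Type*} [CompleteLinearOrder α] [TopologicalSpace α] [OrderTopology α]
  [DenselyOrdered α] [LinearOrder β] [TopologicalSpace β] [OrderClosedTopology β]
  {G : α → β} {a : α} {p : β}

theorem Continuous.level_le_apply_of_sSup_le (hG : Continuous G) (htop : p ≤ G ⊤)
    (ha : sSup {x | G x < p} ≤ a) : p ≤ G a := by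
  by_contra! hGa
  have ha_top : a ≠ ⊤ := by rintro rfl; exact htop.not_gt hGa
  have : NeBot (𝓝[>] a) := nhdsGT_neBot_of_exists_gt ⟨⊤, ha_top.lt_top⟩
  have hmem : {x | G x < p} ∈ 𝓝[>] a :=
    mem_nhdsWithin_of_mem_nhds ((isOpen_lt hG continuous_const).mem_nhds hGa)
  obtain ⟨x, hx, hax⟩ := nonempty_of_mem (inter_mem hmem self_mem_nhdsWithin)
  exact (le_sSup hx |>.trans ha).not_gt hax

theorem Continuous.apply_le_level_of_le_sInf (hG : Continuous G) (hbot : G ⊥ ≤ p)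
    (ha : a ≤ sInf {x | p < G x}) : G a ≤ p :=
  Continuous.level_le_apply_of_sSup_le (α := αᵒᵈ) (β := βᵒᵈ) hG hbot ha

end ContinuousLevel

theorem stmt_15_general (F : ℕ → EReal → ℝ) (Finf : EReal → ℝ)
    (hmono : ∀ n, Monotone (F n))
    (hbot : ∀ n, F n ⊥ = 0) (htop : ∀ n, F n ⊤ = 1)
    (p : ℝ) (hp : p ∈ Set.Ioo (0 : ℝ) 1)
    (q : ℕ → EReal) (hq : ∀ n, F n (q n) = p)
    (hconv : ∀ x, Tendsto (fun n => F n x) atTop (𝓝 (Finf x)))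
    (qinf : EReal) (hqconv : Tendsto q atTop (𝓝 qinf)) :
    sSup {x : EReal | Finf x < p} ≤ qinf ∧
    qinf ≤ sInf {x : EReal | p < Finf x} ∧
    (Continuous Finf → Finf qinf = p) := by
  have hsup : sSup {x : EReal | Finf x < p} ≤ qinf :=
    sSup_le fun x hx => le_of_tendsto_of_apply_lt_level hmono hq (hconv x) hqconv hx
  have hinf : qinf ≤ sInf {x : EReal | p < Finf x} :=
    le_sInf fun x hx => le_of_tendsto_of_level_lt_apply hmono hq (hconv x) hqconv hx
  refine ⟨hsup, hinf, fun hcont => le_antisymm ?_ ?_⟩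
  · have hFbot : Finf ⊥ = 0 := (by simpa [hbot] using hconv ⊥ : (0 : ℝ) = Finf ⊥).symm
    exact hcont.apply_le_level_of_le_sInf (hFbot ▸ hp.1.le) hinf
  · have hFtop : Finf ⊤ = 1 := (by simpa [htop] using hconv ⊤ : (1 : ℝ) = Finf ⊤).symm
    exact hcont.level_le_apply_of_sSup_le (hFtop ▸ hp.2.le) hsup

theorem stmt_15 (F : ℕ → EReal → ℝ) (Finf : EReal → ℝ)
    (hmono : ∀ n, Monotone (F n))
    (hrange : ∀ n, ∀ x, F n x ∈ Set.Icc (0 : ℝ) 1)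
    (hbot : ∀ n, F n ⊥ = 0) (htop : ∀ n, F n ⊤ = 1)
    (p : ℝ) (hp : p ∈ Set.Ioo (0 : ℝ) 1)
    (q : ℕ → EReal) (hq : ∀ n, F n (q n) = p)
    (hconv : ∀ x, Tendsto (fun n => F n x) atTop (𝓝 (Finf x)))
    (qinf : EReal) (hqconv : Tendsto q atTop (𝓝 qinf)) :
    sSup {x : EReal | Finf x < p} ≤ qinf ∧
    qinf ≤ sInf {x : EReal | p < Finf x} ∧
    (Continuous Finf → Finf qinf = p) :=
  stmt_15_general F Finf hmono hbot htop p hp q hq hconv qinf hqconv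
end

section
/- Fix p ∈ (0,1) and b > 0, and let q(a) ∈ (0,1) be defined by ∫₀^{q(a)} t^{a-1}(1-t)^{b-1} dt = p·∫₀^1 t^{a-1}(1-t)^{b-1} dt. Then q is strictly increasing on (0,∞), with lim_{a→0} q(a) = 0 and lim_{a→∞} q(a) = 1. -/
/-!
Write `f_a(t) = t^(a-1) (1-t)^(b-1)` and `I_a(x) = ∫₀ˣ f_a / ∫₀¹ f_a`; as `I_a` is strictly
increasing on `[0, 1]`, `q a` is the unique solution of `I_a(q a) = p`. For `a₁ < a₂` the density
ratio `f_{a₂} / f_{a₁} = t^(a₂-a₁)` is increasing, which forces `I_{a₂}(x) < I_{a₁}(x)` on `(0, 1)`,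
so `q` is increasing. For fixed `x ∈ (0, 1)`, `I_a(x) → 1` as `a → 0`, because the mass of `[0, x]`
grows like `x^a / a` while that of `[x, 1]` stays bounded, and `I_a(x) → 0` as `a → ∞`, because the
mass of `[0, x]` is at most a constant times `(x / y)^(a-1)` times that of `[y, 1]` for `x < y < 1`.
-/

open Real MeasureTheory Filter Topology Set

noncomputable section

def betaIntegrand (a b t : ℝ) : ℝ := t ^ (a - 1) * (1 - t) ^ (b - 1)

def incBeta (a b x : ℝ) : ℝ := ∫ t in (0)..x, betaIntegrand a b t

def regIncBeta (a b x : ℝ) : ℝ := incBeta a b x / incBeta a b 1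

end

section BetaIntegrand

variable {a b t : ℝ}

lemma betaIntegrand_pos (ht : t ∈ Ioo 0 1) : 0 < betaIntegrand a b t :=
  mul_pos (rpow_pos_of_pos ht.1 _) (rpow_pos_of_pos (sub_pos.2 ht.2) _)

lemma intervalIntegrable_betaIntegrand (ha : 0 < a) (hb : 0 < b) :
    IntervalIntegrable (betaIntegrand a b) volume 0 1 := by
  have hc : IntegrableOn
      (fun t : ℝ => ((t : ℂ) ^ ((a : ℂ) - 1) * (1 - (t : ℂ)) ^ ((b : ℂ) - 1)).re) (Ioc 0 1) :=
    (Complex.betaIntegral_convergent (u := a) (v := b) (by simpa) (by simpa)).1.re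
  rw [intervalIntegrable_iff_integrableOn_Ioc_of_le zero_le_one]
  refine hc.congr_fun (fun t ht => ?_) measurableSet_Ioc
  have h1 : (t : ℂ) ^ ((a : ℂ) - 1) = ((t ^ (a - 1) : ℝ) : ℂ) := by
    rw [Complex.ofReal_cpow ht.1.le]; push_cast; ring_nf
  have h2 : ((1 : ℂ) - t) ^ ((b : ℂ) - 1) = (((1 - t) ^ (b - 1) : ℝ) : ℂ) := by
    rw [Complex.ofReal_cpow (sub_nonneg.2 ht.2)]; push_cast; ring_nf
  simp [h1, h2, ← Complex.ofReal_mul, betaIntegrand]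

lemma intervalIntegrable_one_sub_rpow (hb : 0 < b) :
    IntervalIntegrable (fun t : ℝ => (1 - t) ^ (b - 1)) volume 0 1 := by
  simpa using ((intervalIntegral.intervalIntegrable_rpow' (r := b - 1) (a := 0) (b := 1)
    (by linarith)).comp_sub_left 1).symm

end BetaIntegrand

lemma IntervalIntegrable.mono_Icc {f : ℝ → ℝ} {u v x y : ℝ} (hf : IntervalIntegrable f volume u v)
    (huv : u ≤ v) (hx : x ∈ Icc u v) (hy : y ∈ Icc u v) : IntervalIntegrable f volume x y :=
  hf.mono_set (by rw [uIcc_of_le huv]; exact uIcc_subset_Icc hx hy)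

lemma integral_mul_integral_lt_of_single_crossing {f g : ℝ → ℝ} {u w v c : ℝ} (huw : u < w)
    (hwv : w < v) (hf : IntervalIntegrable f volume u v) (hg : IntervalIntegrable g volume u v)
    (hf0 : ∀ t ∈ Ioo u v, 0 < f t) (hlt : ∀ t ∈ Ioo u w, g t < c * f t)
    (hgt : ∀ t ∈ Ioo w v, c * f t < g t) :
    (∫ t in u..w, g t) * (∫ t in u..v, f t) < (∫ t in u..w, f t) * ∫ t in u..v, g t := by
  have huv : u ≤ v := (huw.trans hwv).le
  have hw : w ∈ Icc u v := ⟨huw.le, hwv.le⟩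
  have hf₁ := hf.mono_Icc huv ⟨le_rfl, huv⟩ hw
  have hf₂ := hf.mono_Icc huv hw ⟨huv, le_rfl⟩
  have hg₁ := hg.mono_Icc huv ⟨le_rfl, huv⟩ hw
  have hg₂ := hg.mono_Icc huv hw ⟨huv, le_rfl⟩
  have hF₁ : 0 < ∫ t in u..w, f t := intervalIntegral.intervalIntegral_pos_of_pos_on hf₁
    (fun t ht => hf0 t ⟨ht.1, ht.2.trans hwv⟩) huw
  have hF₂ : 0 < ∫ t in w..v, f t := intervalIntegral.intervalIntegral_pos_of_pos_on hf₂
    (fun t ht => hf0 t ⟨huw.trans ht.1, ht.2⟩) hwv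
  have hG₁ : ∫ t in u..w, g t < c * ∫ t in u..w, f t := by
    have := intervalIntegral.intervalIntegral_pos_of_pos_on ((hf₁.const_mul c).sub hg₁)
      (fun t ht => sub_pos.2 (hlt t ht)) huw
    rw [intervalIntegral.integral_sub (hf₁.const_mul c) hg₁,
      intervalIntegral.integral_const_mul] at this
    linarith
  have hG₂ : c * ∫ t in w..v, f t < ∫ t in w..v, g t := by
    have := intervalIntegral.intervalIntegral_pos_of_pos_on (hg₂.sub (hf₂.const_mul c))
      (fun t ht => sub_pos.2 (hgt t ht)) hwv
    rw [intervalIntegral.integral_sub hg₂ (hf₂.const_mul c),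
      intervalIntegral.integral_const_mul] at this
    linarith
  rw [← intervalIntegral.integral_add_adjacent_intervals hf₁ hf₂,
    ← intervalIntegral.integral_add_adjacent_intervals hg₁ hg₂]
  nlinarith

section IncBeta

variable {a b : ℝ}

lemma incBeta_eq_setIntegral {x : ℝ} (hx : 0 ≤ x) :
    incBeta a b x = ∫ t in Ioo 0 x, t ^ (a - 1) * (1 - t) ^ (b - 1) := by
  rw [incBeta, intervalIntegral.integral_of_le hx, integral_Ioc_eq_integral_Ioo]
  rfl

lemma incBeta_sub (ha : 0 < a) (hb : 0 < b) {x y : ℝ} (hx : x ∈ Icc 0 1) (hy : y ∈ Icc 0 1) :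
    incBeta a b y - incBeta a b x = ∫ t in x..y, betaIntegrand a b t :=
  intervalIntegral.integral_interval_sub_left
    ((intervalIntegrable_betaIntegrand ha hb).mono_Icc zero_le_one ⟨le_rfl, zero_le_one⟩ hy)
    ((intervalIntegrable_betaIntegrand ha hb).mono_Icc zero_le_one ⟨le_rfl, zero_le_one⟩ hx)

lemma incBeta_strictMonoOn (ha : 0 < a) (hb : 0 < b) : StrictMonoOn (incBeta a b) (Icc 0 1) := by
  intro x hx y hy hxy
  rw [← sub_pos, incBeta_sub ha hb hx hy]
  exact intervalIntegral.intervalIntegral_pos_of_pos_on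
    ((intervalIntegrable_betaIntegrand ha hb).mono_Icc zero_le_one hx hy)
    (fun t ht => betaIntegrand_pos ⟨hx.1.trans_lt ht.1, ht.2.trans_le hy.2⟩) hxy

lemma incBeta_pos (ha : 0 < a) (hb : 0 < b) {x : ℝ} (hx : x ∈ Ioc 0 1) : 0 < incBeta a b x := by
  simpa [incBeta] using
    incBeta_strictMonoOn ha hb ⟨le_rfl, zero_le_one⟩ (Ioc_subset_Icc_self hx) hx.1

lemma regIncBeta_strictMonoOn (ha : 0 < a) (hb : 0 < b) :
    StrictMonoOn (regIncBeta a b) (Icc 0 1) := fun _ hx _ hy hxy =>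
  div_lt_div_of_pos_right (incBeta_strictMonoOn ha hb hx hy hxy)
    (incBeta_pos ha hb ⟨zero_lt_one, le_rfl⟩)

lemma betaIntegrand_eq_rpow_mul {a₁ a₂ t : ℝ} (ht : 0 < t) :
    betaIntegrand a₂ b t = t ^ (a₂ - a₁) * betaIntegrand a₁ b t := by
  rw [betaIntegrand, betaIntegrand, ← mul_assoc, ← rpow_add ht]
  ring_nf

lemma regIncBeta_strictAntiOn (hb : 0 < b) {x : ℝ} (hx : x ∈ Ioo 0 1) :
    StrictAntiOn (fun a => regIncBeta a b x) (Ioi 0) := by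
  intro a₁ ha₁ a₂ ha₂ h₁₂
  have hd : 0 < a₂ - a₁ := sub_pos.2 h₁₂
  change incBeta a₂ b x / incBeta a₂ b 1 < incBeta a₁ b x / incBeta a₁ b 1
  rw [div_lt_div_iff₀ (incBeta_pos ha₂ hb ⟨zero_lt_one, le_rfl⟩)
    (incBeta_pos ha₁ hb ⟨zero_lt_one, le_rfl⟩)]
  refine integral_mul_integral_lt_of_single_crossing (c := x ^ (a₂ - a₁)) hx.1 hx.2
    (intervalIntegrable_betaIntegrand ha₁ hb) (intervalIntegrable_betaIntegrand ha₂ hb)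
    (fun t ht => betaIntegrand_pos ht) (fun t ht => ?_) (fun t ht => ?_)
  · rw [betaIntegrand_eq_rpow_mul (a₁ := a₁) (a₂ := a₂) ht.1]
    exact mul_lt_mul_of_pos_right (rpow_lt_rpow ht.1.le ht.2 hd)
      (betaIntegrand_pos ⟨ht.1, ht.2.trans hx.2⟩)
  · rw [betaIntegrand_eq_rpow_mul (a₁ := a₁) (a₂ := a₂) (hx.1.trans ht.1)]
    exact mul_lt_mul_of_pos_right (rpow_lt_rpow hx.1.le ht.1 hd)
      (betaIntegrand_pos ⟨hx.1.trans ht.1, ht.2⟩)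

end IncBeta

lemma min_rpow_one_le {u s c : ℝ} (hu : 0 < u) (hus : u ≤ s) (hs : s ≤ 1) :
    min (u ^ c) 1 ≤ s ^ c := by
  rcases le_total 0 c with hc | hc
  · exact (min_le_left _ _).trans (rpow_le_rpow hu.le hus hc)
  · exact (min_le_right _ _).trans (one_le_rpow_of_pos_of_le_one_of_nonpos (hu.trans_le hus) hs hc)

section Bounds

variable {a b u v s : ℝ}

lemma integral_betaIntegrand_le (ha : 0 < a) (hb : 0 < b) (hu : 0 ≤ u) (huv : u ≤ v) (hv : v ≤ 1)
    (hs : ∀ t ∈ Ioo u v, t ^ (a - 1) ≤ s) :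
    ∫ t in u..v, betaIntegrand a b t ≤ s * ∫ t in u..v, (1 - t) ^ (b - 1) := by
  rw [← intervalIntegral.integral_const_mul]
  refine intervalIntegral.integral_mono_on_of_le_Ioo huv
    ((intervalIntegrable_betaIntegrand ha hb).mono_Icc zero_le_one ⟨hu, huv.trans hv⟩
      ⟨hu.trans huv, hv⟩)
    (((intervalIntegrable_one_sub_rpow hb).mono_Icc zero_le_one ⟨hu, huv.trans hv⟩
      ⟨hu.trans huv, hv⟩).const_mul s) fun t ht => ?_
  exact mul_le_mul_of_nonneg_right (hs t ht) (rpow_nonneg (by linarith [ht.2]) _)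

lemma le_integral_betaIntegrand (ha : 0 < a) (hb : 0 < b) (hu : 0 ≤ u) (huv : u ≤ v) (hv : v ≤ 1)
    (hs : ∀ t ∈ Ioo u v, s ≤ t ^ (a - 1)) :
    s * ∫ t in u..v, (1 - t) ^ (b - 1) ≤ ∫ t in u..v, betaIntegrand a b t := by
  rw [← intervalIntegral.integral_const_mul]
  refine intervalIntegral.integral_mono_on_of_le_Ioo huv
    (((intervalIntegrable_one_sub_rpow hb).mono_Icc zero_le_one ⟨hu, huv.trans hv⟩
      ⟨hu.trans huv, hv⟩).const_mul s)
    ((intervalIntegrable_betaIntegrand ha hb).mono_Icc zero_le_one ⟨hu, huv.trans hv⟩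
      ⟨hu.trans huv, hv⟩) fun t ht => ?_
  exact mul_le_mul_of_nonneg_right (hs t ht) (rpow_nonneg (by linarith [ht.2]) _)

lemma min_rpow_one_mul_rpow_div_le_incBeta (ha : 0 < a) (hb : 0 < b) {x : ℝ} (hx : x ∈ Ioo 0 1) :
    min ((1 - x) ^ (b - 1)) 1 * (x ^ a / a) ≤ incBeta a b x := by
  have hrpow : ∫ t in (0)..x, t ^ (a - 1) = x ^ a / a := by
    rw [integral_rpow (Or.inl (by linarith)), sub_add_cancel, zero_rpow ha.ne', sub_zero]
  rw [← hrpow, ← intervalIntegral.integral_const_mul]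
  refine intervalIntegral.integral_mono_on_of_le_Ioo hx.1.le
    ((intervalIntegral.intervalIntegrable_rpow' (by linarith)).const_mul _)
    ((intervalIntegrable_betaIntegrand ha hb).mono_Icc zero_le_one ⟨le_rfl, zero_le_one⟩
      ⟨hx.1.le, hx.2.le⟩) fun t ht => ?_
  rw [betaIntegrand, mul_comm]
  exact mul_le_mul_of_nonneg_left
    (min_rpow_one_le (sub_pos.2 hx.2) (by linarith [ht.2]) (by linarith [ht.1]))
    (rpow_nonneg ht.1.le _)

end Bounds

section Limits

variable {b x : ℝ}

lemma regIncBeta_nonneg {a : ℝ} (ha : 0 < a) (hb : 0 < b) (hx : x ∈ Ioo 0 1) :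
    0 ≤ regIncBeta a b x :=
  div_nonneg (incBeta_pos ha hb ⟨hx.1, hx.2.le⟩).le (incBeta_pos ha hb ⟨zero_lt_one, le_rfl⟩).le

lemma tendsto_regIncBeta_atTop (hb : 0 < b) (hx : x ∈ Ioo 0 1) :
    Tendsto (fun a => regIncBeta a b x) atTop (𝓝 0) := by
  obtain ⟨y, hxy, hy1⟩ := exists_between hx.2
  have hy0 : 0 < y := hx.1.trans hxy
  set C := ∫ t in (0)..x, (1 - t) ^ (b - 1)
  set c := ∫ t in y..1, (1 - t) ^ (b - 1)
  have hC : 0 ≤ C := intervalIntegral.integral_nonneg hx.1.le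
    fun t ht => rpow_nonneg (by linarith [ht.2, hx.2]) _
  have hc : 0 < c := intervalIntegral.intervalIntegral_pos_of_pos_on
    ((intervalIntegrable_one_sub_rpow hb).mono_Icc zero_le_one ⟨hy0.le, hy1.le⟩
      ⟨zero_le_one, le_rfl⟩)
    (fun t ht => rpow_pos_of_pos (sub_pos.2 ht.2) _) hy1
  have hbound : ∀ a ≥ 1, regIncBeta a b x ≤ (x / y) ^ (a - 1) * (C / c) := by
    intro a ha
    have ha0 : 0 < a := by linarith
    have hF : incBeta a b x ≤ x ^ (a - 1) * C :=
      integral_betaIntegrand_le ha0 hb le_rfl hx.1.le hx.2.le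
        fun t ht => rpow_le_rpow ht.1.le ht.2.le (by linarith)
    have hB : y ^ (a - 1) * c ≤ incBeta a b 1 :=
      calc y ^ (a - 1) * c ≤ ∫ t in y..1, betaIntegrand a b t :=
            le_integral_betaIntegrand ha0 hb hy0.le hy1.le le_rfl
              fun t ht => rpow_le_rpow hy0.le ht.1.le (by linarith)
        _ = incBeta a b 1 - incBeta a b y :=
            (incBeta_sub ha0 hb ⟨hy0.le, hy1.le⟩ ⟨zero_le_one, le_rfl⟩).symm
        _ ≤ incBeta a b 1 := sub_le_self _ (incBeta_pos ha0 hb ⟨hy0, hy1.le⟩).le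
    calc incBeta a b x / incBeta a b 1 ≤ x ^ (a - 1) * C / (y ^ (a - 1) * c) :=
          div_le_div₀ (mul_nonneg (rpow_nonneg hx.1.le _) hC) hF
            (mul_pos (rpow_pos_of_pos hy0 _) hc) hB
      _ = (x / y) ^ (a - 1) * (C / c) := by rw [div_rpow hx.1.le hy0.le]; ring
  have hlim : Tendsto (fun a : ℝ => (x / y) ^ (a - 1) * (C / c)) atTop (𝓝 0) := by
    simpa [sub_eq_add_neg] using
      ((tendsto_rpow_atTop_of_base_lt_one _ (by linarith [div_pos hx.1 hy0])
        ((div_lt_one hy0).2 hxy)).comp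
          (tendsto_atTop_add_const_right _ (-1) tendsto_id)).mul_const (C / c)
  refine tendsto_of_tendsto_of_tendsto_of_le_of_le' tendsto_const_nhds hlim ?_ ?_
  · filter_upwards [eventually_gt_atTop 0] with a ha using regIncBeta_nonneg ha hb hx
  · filter_upwards [eventually_ge_atTop 1] with a ha using hbound a ha

lemma tendsto_regIncBeta_nhdsGT_zero (hb : 0 < b) (hx : x ∈ Ioo 0 1) :
    Tendsto (fun a => regIncBeta a b x) (𝓝[>] 0) (𝓝 1) := by
  set C := ∫ t in x..1, (1 - t) ^ (b - 1)
  set m := min ((1 - x) ^ (b - 1)) 1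
  have hm : 0 < m := lt_min (rpow_pos_of_pos (sub_pos.2 hx.2) _) one_pos
  have hC : 0 ≤ C := intervalIntegral.integral_nonneg hx.2.le
    fun t ht => rpow_nonneg (by linarith [ht.2]) _
  have hbounds : ∀ a ∈ Ioc (0 : ℝ) 1,
      0 ≤ 1 - regIncBeta a b x ∧ 1 - regIncBeta a b x ≤ a * (C / (m * x)) := by
    rintro a ⟨ha0, ha1⟩
    have hF : 0 < incBeta a b x := incBeta_pos ha0 hb ⟨hx.1, hx.2.le⟩
    have hT : 0 ≤ incBeta a b 1 - incBeta a b x := sub_nonneg.2 <|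
      (incBeta_strictMonoOn ha0 hb).monotoneOn ⟨hx.1.le, hx.2.le⟩ ⟨zero_le_one, le_rfl⟩ hx.2.le
    have hTle : incBeta a b 1 - incBeta a b x ≤ x ^ (a - 1) * C := by
      rw [incBeta_sub ha0 hb ⟨hx.1.le, hx.2.le⟩ ⟨zero_le_one, le_rfl⟩]
      exact integral_betaIntegrand_le ha0 hb hx.1.le hx.2.le le_rfl
        fun t ht => rpow_le_rpow_of_nonpos hx.1 ht.1.le (by linarith)
    have hrepr : 1 - regIncBeta a b x
        = (incBeta a b 1 - incBeta a b x) / incBeta a b 1 := by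
      rw [regIncBeta, one_sub_div (by linarith)]
    rw [hrepr]
    refine ⟨div_nonneg hT (by linarith), ?_⟩
    calc (incBeta a b 1 - incBeta a b x) / incBeta a b 1
        ≤ (incBeta a b 1 - incBeta a b x) / incBeta a b x :=
          div_le_div_of_nonneg_left hT hF (by linarith)
      _ ≤ x ^ (a - 1) * C / (m * (x ^ a / a)) :=
          div_le_div₀ (mul_nonneg (rpow_nonneg hx.1.le _) hC) hTle
            (mul_pos hm (div_pos (rpow_pos_of_pos hx.1 _) ha0))
            (min_rpow_one_mul_rpow_div_le_incBeta ha0 hb hx)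
      _ = a * (C / (m * x)) := by
          have := (rpow_pos_of_pos hx.1 a).ne'
          rw [rpow_sub_one hx.1.ne']
          field_simp
  have hlim : Tendsto (fun a : ℝ => a * (C / (m * x))) (𝓝[>] 0) (𝓝 0) :=
    ((continuous_mul_const _).tendsto' 0 0 (zero_mul _)).mono_left nhdsWithin_le_nhds
  have hsub : Tendsto (fun a => 1 - regIncBeta a b x) (𝓝[>] 0) (𝓝 0) :=
    tendsto_of_tendsto_of_tendsto_of_le_of_le' tendsto_const_nhds hlim
      (eventually_of_mem (Ioc_mem_nhdsGT zero_lt_one) fun a ha => (hbounds a ha).1)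
      (eventually_of_mem (Ioc_mem_nhdsGT zero_lt_one) fun a ha => (hbounds a ha).2)
  simpa using (tendsto_const_nhds (x := (1 : ℝ))).sub hsub

end Limits

theorem stmt_16 (p b : ℝ) (hp : p ∈ Set.Ioo (0 : ℝ) 1) (hb : 0 < b)
    (q : ℝ → ℝ)
    (hq : ∀ a : ℝ, 0 < a → q a ∈ Set.Ioo (0 : ℝ) 1 ∧
      (∫ t in Set.Ioo (0 : ℝ) (q a), t ^ (a - 1) * (1 - t) ^ (b - 1))
        = p * ∫ t in Set.Ioo (0 : ℝ) 1, t ^ (a - 1) * (1 - t) ^ (b - 1)) :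
    StrictMonoOn q (Set.Ioi 0) ∧
    Tendsto q (𝓝[>] 0) (𝓝 0) ∧
    Tendsto q atTop (𝓝 1) := by
  have hquantile : ∀ a, 0 < a → regIncBeta a b (q a) = p := fun a ha => by
    have hB := incBeta_pos ha hb ⟨zero_lt_one, le_rfl⟩
    rw [incBeta_eq_setIntegral zero_le_one] at hB
    rw [regIncBeta, incBeta_eq_setIntegral (hq a ha).1.1.le, incBeta_eq_setIntegral zero_le_one,
      (hq a ha).2, mul_div_cancel_right₀ _ hB.ne']
  have hlt_iff : ∀ a, 0 < a → ∀ x ∈ Icc (0 : ℝ) 1,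
      (regIncBeta a b x < p ↔ x < q a) ∧ (p < regIncBeta a b x ↔ q a < x) := fun a ha x hx => by
    rw [← hquantile a ha]
    exact ⟨(regIncBeta_strictMonoOn ha hb).lt_iff_lt hx (Ioo_subset_Icc_self (hq a ha).1),
      (regIncBeta_strictMonoOn ha hb).lt_iff_lt (Ioo_subset_Icc_self (hq a ha).1) hx⟩
  refine ⟨fun a₁ ha₁ a₂ ha₂ h₁₂ => ?_, tendsto_order.2 ⟨fun x hx => ?_, fun x hx => ?_⟩,
    tendsto_order.2 ⟨fun x hx => ?_, fun x hx => ?_⟩⟩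
  · rw [← (hlt_iff a₂ ha₂ _ (Ioo_subset_Icc_self (hq a₁ ha₁).1)).1, ← hquantile a₁ ha₁]
    exact regIncBeta_strictAntiOn hb (hq a₁ ha₁).1 ha₁ ha₂ h₁₂
  · filter_upwards [self_mem_nhdsWithin] with a ha using hx.trans (hq a ha).1.1
  · have hy : min x 2⁻¹ ∈ Ioo (0 : ℝ) 1 :=
      ⟨lt_min hx (by norm_num), (min_le_right _ _).trans_lt (by norm_num)⟩
    filter_upwards [self_mem_nhdsWithin,
      (tendsto_regIncBeta_nhdsGT_zero hb hy).eventually_const_lt hp.2] with a ha hpa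
    exact ((hlt_iff a ha _ (Ioo_subset_Icc_self hy)).2.1 hpa).trans_le (min_le_left _ _)
  · have hy : max x 2⁻¹ ∈ Ioo (0 : ℝ) 1 :=
      ⟨lt_max_of_lt_right (by norm_num), max_lt hx (by norm_num)⟩
    filter_upwards [eventually_gt_atTop 0,
      (tendsto_regIncBeta_atTop hb hy).eventually_lt_const hp.1] with a ha hpa
    exact (le_max_left _ _).trans_lt ((hlt_iff a ha _ (Ioo_subset_Icc_self hy)).1.1 hpa)
  · filter_upwards [eventually_gt_atTop 0] with a ha using (hq a ha).1.2.trans hx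
end

section
/- Fix p ∈ (0,1), b > 0, and let q(a) be the p-quantile of the Beta(a,b) distribution. If b = 1 then -a·log q(a) = -log p for all a > 0; if b > 1 then a ↦ -a·log q(a) is increasing; if b < 1 it is decreasing. Moreover lim_{a→0} (-a log q(a)) = -log p. -/
open Real MeasureTheory Filter Topology Set

/-! The substitution `t = s ^ (1 / a)` turns the `Beta(a, b)` density into a constant multiple
of `w_a s = (1 - s ^ (1 / a)) ^ (b - 1)` on `(0, 1)`, so `Q a = q a ^ a = exp (-φ a)` is the
`p`-quantile of `w_a`. For `b = 1` the weight is `1`, hence `Q a = p`. For `a < a'` the likelihood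
ratio `w_{a'} / w_a = ((1 - s ^ (1 / a')) / (1 - s ^ (1 / a))) ^ (b - 1)` is a power of the chord
slope of the strictly concave `v ↦ v ^ (a / a')` between `v = s ^ (1 / a)` and `1`, so it is
strictly decreasing for `b > 1` and strictly increasing for `b < 1`; a decreasing likelihood
ratio moves quantiles down. Finally `w_a → 1` dominatedly as `a → 0⁺`, so `Q a → p`. -/

def IsQuantile (f : ℝ → ℝ) (p Q : ℝ) : Prop :=
  Q ∈ Ioo 0 1 ∧ ∫ t in Ioo 0 Q, f t = p * ∫ t in Ioo 0 1, f t

noncomputable def betaDensity (a b t : ℝ) : ℝ := t ^ (a - 1) * (1 - t) ^ (b - 1)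

-- the density of `X ^ a` for `X ∼ Beta(a, b)`, up to a constant factor
noncomputable def betaPowDensity (a b s : ℝ) : ℝ := (1 - s ^ a⁻¹) ^ (b - 1)

lemma integrableOn_betaDensity {a b : ℝ} (ha : 0 < a) (hb : 0 < b) :
    IntegrableOn (betaDensity a b) (Ioo 0 1) := by
  have h := (Complex.betaIntegral_convergent (u := a) (v := b) (by simpa) (by simpa)).norm
  rw [intervalIntegrable_iff_integrableOn_Ioo_of_le zero_le_one] at h
  refine h.congr_fun (fun t ht => ?_) measurableSet_Ioo
  have h1t : 0 < 1 - t := sub_pos.2 ht.2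
  dsimp only
  rw [norm_mul, show 1 - (t : ℂ) = ((1 - t : ℝ) : ℂ) by push_cast; rfl,
    Complex.norm_cpow_eq_rpow_re_of_pos ht.1, Complex.norm_cpow_eq_rpow_re_of_pos h1t]
  simp [betaDensity]

lemma image_rpow_Ioo {c m : ℝ} (hc : 0 < c) (hm : 0 ≤ m) :
    (fun s : ℝ => s ^ c) '' Ioo 0 m = Ioo 0 (m ^ c) := by
  ext t
  constructor
  · rintro ⟨s, ⟨hs0, hsm⟩, rfl⟩
    exact ⟨rpow_pos_of_pos hs0 c, rpow_lt_rpow hs0.le hsm hc⟩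
  · rintro ⟨ht0, htm⟩
    refine ⟨t ^ c⁻¹, ⟨rpow_pos_of_pos ht0 _, ?_⟩, rpow_inv_rpow ht0.le hc.ne'⟩
    simpa [rpow_rpow_inv hm hc.ne'] using rpow_lt_rpow ht0.le htm (inv_pos.2 hc)

lemma injOn_rpow_Ioo {c m : ℝ} (hc : c ≠ 0) : InjOn (fun s : ℝ => s ^ c) (Ioo 0 m) :=
  fun _ hx _ hy hxy => rpow_left_injOn hc hx.1.le hy.1.le hxy

lemma betaDensity_rpow_inv_mul_deriv {a b s : ℝ} (ha : 0 < a) (hs : 0 < s) :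
    |a⁻¹ * s ^ (a⁻¹ - 1)| • betaDensity a b (s ^ a⁻¹) = a⁻¹ * betaPowDensity a b s := by
  rw [abs_of_pos (by positivity), smul_eq_mul, betaDensity, betaPowDensity,
    ← rpow_mul hs.le, mul_assoc, ← mul_assoc (s ^ _), ← rpow_add hs]
  field_simp
  simp

lemma hasDerivWithinAt_rpow_inv {a m s : ℝ} (hs : s ∈ Ioo 0 m) :
    HasDerivWithinAt (fun s : ℝ => s ^ a⁻¹) (a⁻¹ * s ^ (a⁻¹ - 1)) (Ioo 0 m) s :=
  (hasDerivAt_rpow_const (Or.inl hs.1.ne')).hasDerivWithinAt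

lemma integral_betaDensity_rpow_inv {a b m : ℝ} (ha : 0 < a) (hm : 0 ≤ m) :
    ∫ t in Ioo 0 (m ^ a⁻¹), betaDensity a b t = a⁻¹ * ∫ s in Ioo 0 m, betaPowDensity a b s := by
  rw [← image_rpow_Ioo (inv_pos.2 ha) hm, integral_image_eq_integral_abs_deriv_smul
    measurableSet_Ioo (fun _ => hasDerivWithinAt_rpow_inv)
    (injOn_rpow_Ioo (inv_ne_zero ha.ne')), ← integral_const_mul]
  exact setIntegral_congr_fun measurableSet_Ioo fun s hs =>
    betaDensity_rpow_inv_mul_deriv ha hs.1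

lemma integrableOn_betaPowDensity {a b : ℝ} (ha : 0 < a) (hb : 0 < b) :
    IntegrableOn (betaPowDensity a b) (Ioo 0 1) := by
  have h := integrableOn_betaDensity ha hb
  rw [← one_rpow a⁻¹, ← image_rpow_Ioo (inv_pos.2 ha) zero_le_one,
    integrableOn_image_iff_integrableOn_abs_deriv_smul measurableSet_Ioo
      (fun _ => hasDerivWithinAt_rpow_inv) (injOn_rpow_Ioo (inv_ne_zero ha.ne'))] at h
  refine IntegrableOn.congr_fun (h.const_mul a) (fun s hs => ?_) measurableSet_Ioo
  rw [betaDensity_rpow_inv_mul_deriv ha hs.1, mul_inv_cancel_left₀ ha.ne']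

lemma IsQuantile.betaPowDensity_rpow {a b p q : ℝ} (ha : 0 < a)
    (hq : IsQuantile (betaDensity a b) p q) :
    IsQuantile (betaPowDensity a b) p (q ^ a) := by
  obtain ⟨hq01, hint⟩ := hq
  refine ⟨⟨rpow_pos_of_pos hq01.1 a, rpow_lt_one hq01.1.le hq01.2 ha⟩, ?_⟩
  rw [← rpow_rpow_inv hq01.1.le ha.ne', ← one_rpow a⁻¹,
    integral_betaDensity_rpow_inv ha (rpow_pos_of_pos hq01.1 a).le,
    integral_betaDensity_rpow_inv ha zero_le_one, mul_left_comm] at hint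
  exact mul_left_cancel₀ (inv_ne_zero ha.ne') hint

section Quantile

variable {f g : ℝ → ℝ} {p : ℝ}

lemma setIntegral_Ioo_add_setIntegral_Ioo {x y z : ℝ} (hg : IntegrableOn g (Ioo x z))
    (hy : y ∈ Ioo x z) : (∫ t in Ioo x y, g t) + ∫ t in Ioo y z, g t = ∫ t in Ioo x z, g t := by
  rw [← Ioo_union_Ico_eq_Ioo hy.1 hy.2.le,
    setIntegral_union (disjoint_left.2 fun _ h₁ h₂ => h₁.2.not_ge h₂.1)
    measurableSet_Ico (hg.mono_set (Ioo_subset_Ioo_right hy.2.le))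
    (hg.mono_set fun t ht => ⟨hy.1.trans_le ht.1, ht.2⟩), integral_Ico_eq_integral_Ioo]

lemma setIntegral_Ioo_pos {x y : ℝ} (hxy : x < y) (hg : IntegrableOn g (Ioo x y))
    (hg0 : ∀ t ∈ Ioo x y, 0 < g t) : 0 < ∫ t in Ioo x y, g t := by
  rw [← integral_Ioc_eq_integral_Ioo, ← intervalIntegral.integral_of_le hxy.le]
  exact intervalIntegral.intervalIntegral_pos_of_pos_on
    ((intervalIntegrable_iff_integrableOn_Ioo_of_le hxy.le).2 hg) hg0 hxy

lemma setIntegral_Ioo_zero_mono {x y : ℝ} (hf : IntegrableOn f (Ioo 0 1))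
    (hf0 : ∀ t ∈ Ioo 0 1, 0 ≤ f t) (hxy : x ≤ y) (hy : y ≤ 1) :
    ∫ t in Ioo 0 x, f t ≤ ∫ t in Ioo 0 y, f t :=
  setIntegral_mono_set (hf.mono_set (Ioo_subset_Ioo_right hy))
    ((ae_restrict_iff' measurableSet_Ioo).2 (.of_forall fun t ht => hf0 t ⟨ht.1, ht.2.trans_le hy⟩))
    (Ioo_subset_Ioo_right hxy).eventuallyLE

variable {Q x : ℝ}

lemma IsQuantile.lt_of_integral_lt (hQ : IsQuantile f p Q) (hf : IntegrableOn f (Ioo 0 1))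
    (hf0 : ∀ t ∈ Ioo 0 1, 0 ≤ f t) (hx : x ≤ 1)
    (h : ∫ t in Ioo 0 x, f t < p * ∫ t in Ioo 0 1, f t) : x < Q := by
  by_contra! hQx
  linarith [setIntegral_Ioo_zero_mono hf hf0 hQx hx, hQ.2]

lemma IsQuantile.lt_of_lt_integral (hQ : IsQuantile f p Q) (hf : IntegrableOn f (Ioo 0 1))
    (hf0 : ∀ t ∈ Ioo 0 1, 0 ≤ f t) (h : p * ∫ t in Ioo 0 1, f t < ∫ t in Ioo 0 x, f t) :
    Q < x := by
  by_contra! hxQ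
  linarith [setIntegral_Ioo_zero_mono hf hf0 hxQ hQ.1.2.le, hQ.2]

lemma IsQuantile.lt_of_strictAntiOn_ratio {r : ℝ → ℝ} {Qf Qg : ℝ} (hp : p ∈ Ioo 0 1)
    (hf : IntegrableOn f (Ioo 0 1)) (hg : IntegrableOn g (Ioo 0 1))
    (hf0 : ∀ t ∈ Ioo 0 1, 0 < f t) (hg0 : ∀ t ∈ Ioo 0 1, 0 ≤ g t)
    (hr : StrictAntiOn r (Ioo 0 1)) (hgf : ∀ t ∈ Ioo 0 1, g t = r t * f t)
    (hQf : IsQuantile f p Qf) (hQg : IsQuantile g p Qg) : Qg < Qf := by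
  obtain ⟨⟨hQ0, hQ1⟩, hfQ⟩ := hQf
  refine hQg.lt_of_lt_integral hg hg0 ?_
  have hlo : Ioo 0 Qf ⊆ Ioo 0 1 := Ioo_subset_Ioo_right hQ1.le
  have hhi : Ioo Qf 1 ⊆ Ioo 0 1 := Ioo_subset_Ioo_left hQ0.le
  have hbelow : r Qf * ∫ t in Ioo 0 Qf, f t < ∫ t in Ioo 0 Qf, g t := by
    rw [← integral_const_mul, ← sub_pos, ← integral_sub (hg.mono_set hlo)
      ((hf.mono_set hlo).const_mul _)]
    refine setIntegral_Ioo_pos hQ0 ((hg.mono_set hlo).sub ((hf.mono_set hlo).const_mul _))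
      fun t ht => ?_
    rw [hgf t (hlo ht), ← sub_mul]
    exact mul_pos (sub_pos.2 (hr (hlo ht) ⟨hQ0, hQ1⟩ ht.2)) (hf0 t (hlo ht))
  have habove : ∫ t in Ioo Qf 1, g t ≤ r Qf * ∫ t in Ioo Qf 1, f t := by
    rw [← integral_const_mul]
    refine setIntegral_mono_on (hg.mono_set hhi) ((hf.mono_set hhi).const_mul _)
      measurableSet_Ioo fun t ht => ?_
    rw [hgf t (hhi ht)]
    exact mul_le_mul_of_nonneg_right (hr.antitoneOn ⟨hQ0, hQ1⟩ (hhi ht) ht.1.le)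
      (hf0 t (hhi ht)).le
  rw [← setIntegral_Ioo_add_setIntegral_Ioo hf ⟨hQ0, hQ1⟩] at hfQ
  rw [← setIntegral_Ioo_add_setIntegral_Ioo hg ⟨hQ0, hQ1⟩]
  -- `(1 - p) ∫₀^Qf g > (1 - p) r Qf ∫₀^Qf f = p r Qf ∫_Qf^1 f ≥ p ∫_Qf^1 g`
  linarith [mul_lt_mul_of_pos_left hbelow (sub_pos.2 hp.2),
    mul_le_mul_of_nonneg_left habove hp.1.le, congrArg (r Qf * ·) hfQ]

end Quantile

lemma strictAntiOn_one_sub_rpow_div_one_sub {c : ℝ} (hc₀ : 0 < c) (hc₁ : c < 1) :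
    StrictAntiOn (fun v : ℝ => (1 - v ^ c) / (1 - v)) (Ioo 0 1) := by
  intro x hx y hy hxy
  -- the slope of the chord of the strictly concave `v ↦ v ^ c` between `v` and `1`
  have h := (strictConcaveOn_rpow hc₀ hc₁).secant_strict_mono (mem_Ici.2 zero_le_one)
    (mem_Ici.2 hx.1.le) (mem_Ici.2 hy.1.le) hx.2.ne hy.2.ne hxy
  simp only [one_rpow] at h
  rwa [← neg_div_neg_eq, neg_sub, neg_sub, ← neg_div_neg_eq (x ^ c - 1), neg_sub, neg_sub] at h

lemma strictAntiOn_one_sub_rpow_inv_div_rpow {a a' e : ℝ} (ha : 0 < a) (haa' : a < a')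
    (he : 0 < e) :
    StrictAntiOn (fun s : ℝ => ((1 - s ^ a'⁻¹) / (1 - s ^ a⁻¹)) ^ e) (Ioo 0 1) := by
  have ha' : 0 < a' := ha.trans haa'
  have hpow : ∀ s : ℝ, 0 ≤ s → (s ^ a⁻¹) ^ (a / a') = s ^ a'⁻¹ := fun s hs => by
    rw [← rpow_mul hs]; congr 1; field_simp
  have hratio : StrictAntiOn (fun s : ℝ => (1 - s ^ a'⁻¹) / (1 - s ^ a⁻¹)) (Ioo 0 1) := by
    intro x hx y hy hxy
    have hmem : ∀ s ∈ Ioo (0 : ℝ) 1, s ^ a⁻¹ ∈ Ioo (0 : ℝ) 1 := fun s hs =>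
      ⟨rpow_pos_of_pos hs.1 _, rpow_lt_one hs.1.le hs.2 (inv_pos.2 ha)⟩
    simpa only [hpow x hx.1.le, hpow y hy.1.le] using
      strictAntiOn_one_sub_rpow_div_one_sub (div_pos ha ha') ((div_lt_one ha').2 haa')
        (hmem x hx) (hmem y hy) (rpow_lt_rpow hx.1.le hxy (inv_pos.2 ha))
  refine (strictMonoOn_rpow_Ici_of_exponent_pos he).comp_strictAntiOn hratio fun s hs => ?_
  exact mem_Ici.2 (div_nonneg (sub_nonneg.2 (rpow_le_one hs.1.le hs.2.le (inv_pos.2 ha').le))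
    (sub_nonneg.2 (rpow_le_one hs.1.le hs.2.le (inv_pos.2 ha).le)))

lemma one_sub_rpow_inv_pos {a s : ℝ} (ha : 0 < a) (hs : s ∈ Ioo 0 1) : 0 < 1 - s ^ a⁻¹ :=
  sub_pos.2 (rpow_lt_one hs.1.le hs.2 (inv_pos.2 ha))

lemma betaPowDensity_pos {a b s : ℝ} (ha : 0 < a) (hs : s ∈ Ioo 0 1) :
    0 < betaPowDensity a b s :=
  rpow_pos_of_pos (one_sub_rpow_inv_pos ha hs) _

lemma betaPowDensity_eq_div_rpow_mul {a a' b s : ℝ} (ha : 0 < a) (ha' : 0 < a')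
    (hs : s ∈ Ioo 0 1) :
    betaPowDensity a' b s =
      ((1 - s ^ a'⁻¹) / (1 - s ^ a⁻¹)) ^ (b - 1) * betaPowDensity a b s := by
  rw [div_rpow (one_sub_rpow_inv_pos ha' hs).le (one_sub_rpow_inv_pos ha hs).le]
  exact (div_mul_cancel₀ _ (betaPowDensity_pos ha hs).ne').symm

lemma quantile_betaPowDensity_lt_of_one_lt {a a' b p Q Q' : ℝ} (hp : p ∈ Ioo 0 1)
    (hb : 1 < b) (ha : 0 < a) (haa' : a < a') (hQ : IsQuantile (betaPowDensity a b) p Q)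
    (hQ' : IsQuantile (betaPowDensity a' b) p Q') : Q' < Q :=
  have ha' : 0 < a' := ha.trans haa'
  hQ.lt_of_strictAntiOn_ratio hp (integrableOn_betaPowDensity ha (by linarith))
    (integrableOn_betaPowDensity ha' (by linarith)) (fun _ => betaPowDensity_pos ha)
    (fun _ hs => (betaPowDensity_pos ha' hs).le)
    (strictAntiOn_one_sub_rpow_inv_div_rpow ha haa' (sub_pos.2 hb))
    (fun _ hs => betaPowDensity_eq_div_rpow_mul ha ha' hs) hQ'

lemma quantile_betaPowDensity_lt_of_lt_one {a a' b p Q Q' : ℝ} (hp : p ∈ Ioo 0 1)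
    (hb₀ : 0 < b) (hb : b < 1) (ha : 0 < a) (haa' : a < a')
    (hQ : IsQuantile (betaPowDensity a b) p Q) (hQ' : IsQuantile (betaPowDensity a' b) p Q') :
    Q < Q' := by
  have ha' : 0 < a' := ha.trans haa'
  refine hQ'.lt_of_strictAntiOn_ratio hp (integrableOn_betaPowDensity ha' hb₀)
    (integrableOn_betaPowDensity ha hb₀) (fun _ => betaPowDensity_pos ha')
    (fun _ hs => (betaPowDensity_pos ha hs).le)
    (strictAntiOn_one_sub_rpow_inv_div_rpow ha haa' (sub_pos.2 hb)) (fun s hs => ?_) hQ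
  rw [betaPowDensity_eq_div_rpow_mul ha ha' hs, ← mul_assoc, ← rpow_add
    (div_pos (one_sub_rpow_inv_pos ha' hs) (one_sub_rpow_inv_pos ha hs)), sub_add_sub_cancel',
    sub_self, rpow_zero, one_mul]

lemma betaPowDensity_le {a b s : ℝ} (ha : a ∈ Ioc 0 1) (hs : s ∈ Ioo 0 1) :
    betaPowDensity a b s ≤ 1 + betaDensity 1 b s := by
  have hsa : s ^ a⁻¹ ≤ s := by
    simpa using rpow_le_rpow_of_exponent_ge hs.1 hs.2.le (one_le_inv₀ ha.1 |>.2 ha.2)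
  have h1 : betaDensity 1 b s = (1 - s) ^ (b - 1) := by simp [betaDensity]
  have h0 : 0 ≤ (1 - s) ^ (b - 1) := rpow_nonneg (sub_pos.2 hs.2).le _
  rcases le_or_gt 1 b with hb | hb
  · have : betaPowDensity a b s ≤ 1 :=
      rpow_le_one (one_sub_rpow_inv_pos ha.1 hs).le (by linarith [rpow_pos_of_pos hs.1 a⁻¹])
        (by linarith)
    linarith
  · have : betaPowDensity a b s ≤ (1 - s) ^ (b - 1) :=
      rpow_le_rpow_of_nonpos (sub_pos.2 hs.2) (by linarith) (by linarith)
    linarith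

lemma tendsto_betaPowDensity {b s : ℝ} (hs : s ∈ Ioo 0 1) :
    Tendsto (fun a => betaPowDensity a b s) (𝓝[>] 0) (𝓝 1) := by
  have h : Tendsto (fun a : ℝ => s ^ a⁻¹) (𝓝[>] 0) (𝓝 0) :=
    (tendsto_rpow_atTop_of_base_lt_one s (by linarith [hs.1]) hs.2).comp tendsto_inv_nhdsGT_zero
  simpa [betaPowDensity] using (h.const_sub 1).rpow_const (p := b - 1) (Or.inl (by norm_num))

lemma tendsto_setIntegral_betaPowDensity {b x : ℝ} (hb : 0 < b) (hx : x ∈ Icc 0 1) :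
    Tendsto (fun a => ∫ s in Ioo 0 x, betaPowDensity a b s) (𝓝[>] 0) (𝓝 x) := by
  have hsub : Ioo 0 x ⊆ Ioo 0 1 := Ioo_subset_Ioo_right hx.2
  have hbound : IntegrableOn (fun s => 1 + betaDensity 1 b s) (Ioo 0 1) :=
    (integrableOn_const (by simp)).add (integrableOn_betaDensity one_pos hb)
  have h := tendsto_integral_filter_of_dominated_convergence (μ := volume.restrict (Ioo 0 x))
    (F := fun a s => betaPowDensity a b s) (f := fun _ => 1) _
    (.of_forall fun _ => Measurable.aestronglyMeasurable (by unfold betaPowDensity; fun_prop))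
    (by
      filter_upwards [Ioc_mem_nhdsGT one_pos] with a ha
      refine (ae_restrict_iff' measurableSet_Ioo).2 (.of_forall fun s hs => ?_)
      rw [norm_of_nonneg (betaPowDensity_pos ha.1 (hsub hs)).le]
      exact betaPowDensity_le ha (hsub hs))
    (hbound.mono_set hsub)
    ((ae_restrict_iff' measurableSet_Ioo).2 (.of_forall fun s hs =>
      tendsto_betaPowDensity (hsub hs)))
  simpa [hx.1] using h

lemma tendsto_quantile_betaPowDensity {b p : ℝ} {Q : ℝ → ℝ} (hp : p ∈ Ioo 0 1)
    (hb : 0 < b) (hQ : ∀ a, 0 < a → IsQuantile (betaPowDensity a b) p (Q a)) :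
    Tendsto Q (𝓝[>] 0) (𝓝 p) := by
  have hmass :
      Tendsto (fun a => p * ∫ s in Ioo 0 1, betaPowDensity a b s) (𝓝[>] 0) (𝓝 p) := by
    simpa using (tendsto_setIntegral_betaPowDensity hb ⟨zero_le_one, le_rfl⟩).const_mul p
  refine tendsto_order.2 ⟨fun x hx => ?_, fun x hx => ?_⟩
  · have hy : max x 0 ∈ Icc 0 1 :=
      ⟨le_max_right _ _, max_le (by linarith [hp.2]) zero_le_one⟩
    filter_upwards [(tendsto_setIntegral_betaPowDensity hb hy).eventually_lt hmass
      (max_lt hx hp.1), self_mem_nhdsWithin] with a h (ha : 0 < a)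
    exact (le_max_left x 0).trans_lt <| (hQ a ha).lt_of_integral_lt
      (integrableOn_betaPowDensity ha hb) (fun _ hs => (betaPowDensity_pos ha hs).le) hy.2 h
  · have hy : min x 1 ∈ Icc 0 1 :=
      ⟨le_min (by linarith [hp.1]) zero_le_one, min_le_right _ _⟩
    filter_upwards [hmass.eventually_lt (tendsto_setIntegral_betaPowDensity hb hy)
      (lt_min hx hp.2), self_mem_nhdsWithin] with a h (ha : 0 < a)
    exact ((hQ a ha).lt_of_lt_integral (integrableOn_betaPowDensity ha hb)
      (fun _ hs => (betaPowDensity_pos ha hs).le) h).trans_le (min_le_left x 1)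

lemma IsQuantile.eq_of_betaPowDensity_one {a p Q : ℝ}
    (hQ : IsQuantile (betaPowDensity a 1) p Q) : Q = p := by
  simpa [betaPowDensity, hQ.1.1.le] using hQ.2

theorem stmt_18 (p b : ℝ) (hp : p ∈ Set.Ioo (0 : ℝ) 1) (hb : 0 < b)
    (q : ℝ → ℝ)
    (hq : ∀ a : ℝ, 0 < a → q a ∈ Set.Ioo (0 : ℝ) 1 ∧
      (∫ t in Set.Ioo (0 : ℝ) (q a), t ^ (a - 1) * (1 - t) ^ (b - 1))
        = p * ∫ t in Set.Ioo (0 : ℝ) 1, t ^ (a - 1) * (1 - t) ^ (b - 1)) :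
    (b = 1 → ∀ a : ℝ, 0 < a → -a * Real.log (q a) = -Real.log p) ∧
    (1 < b → StrictMonoOn (fun a => -a * Real.log (q a)) (Set.Ioi 0)) ∧
    (b < 1 → StrictAntiOn (fun a => -a * Real.log (q a)) (Set.Ioi 0)) ∧
    Tendsto (fun a => -a * Real.log (q a)) (𝓝[>] 0) (𝓝 (-Real.log p)) := by
  have hQ : ∀ a, 0 < a → IsQuantile (betaPowDensity a b) p (q a ^ a) := fun a ha =>
    IsQuantile.betaPowDensity_rpow ha (hq a ha)
  have hφ : ∀ a, 0 < a → -a * log (q a) = -log (q a ^ a) := fun a ha => by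
    rw [log_rpow (hq a ha).1.1]; ring
  refine ⟨fun hb₁ a ha => ?_, fun hb₁ a ha a' ha' haa' => ?_,
    fun hb₁ a ha a' ha' haa' => ?_, ?_⟩
  · subst hb₁
    rw [hφ a ha, (hQ a ha).eq_of_betaPowDensity_one]
  · simp only [hφ a ha, hφ a' ha']
    exact neg_lt_neg (log_lt_log (hQ a' ha').1.1
      (quantile_betaPowDensity_lt_of_one_lt hp hb₁ ha haa' (hQ a ha) (hQ a' ha')))
  · simp only [hφ a ha, hφ a' ha']
    exact neg_lt_neg (log_lt_log (hQ a ha).1.1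
      (quantile_betaPowDensity_lt_of_lt_one hp hb hb₁ ha haa' (hQ a ha) (hQ a' ha')))
  · refine (((continuousAt_log hp.1.ne').tendsto.comp
      (tendsto_quantile_betaPowDensity hp hb hQ)).neg).congr' ?_
    filter_upwards [self_mem_nhdsWithin] with a ha
    exact (hφ a ha).symm
end
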